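/- arXiv:1306.0031 — 5 statements merged into one kernel-verified Lean document; each statement's English description precedes it below -/
import Mathlib

section
/- The number of elements in the symmetric group S_n whose square is the identity equals n! times the coefficient of u^n in the exponential generating function e^{u + u^2/2}. -/
/-!
Both sides satisfy `a 0 = a 1 = 1` and `a (n + 2) = a (n + 1) + (n + 1) * a n`.

An involution `σ` of an `(n + 2)`-element set either fixes a chosen point `a`, and is then an
involution of the other `n + 1` points, or swaps `a` with one of the `n + 1` other points `b`,
and then `swap a b * σ` is an involution fixing `a` and `b`, i.e. an involution of the remaining
`n` points.

The function `f u = exp (u + u ^ 2 / 2)` satisfies `f' = f + u * f`, and Leibniz's rule evaluated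
at `0` turns this into the recursion for the derivatives `f⁽ⁿ⁾ 0`.
-/

open Equiv Finset Real

namespace Equiv.Perm

variable {α : Type*}

theorem commute_swap_of_swap_apply_eq [DecidableEq α] {σ : Perm α} {a b : α}
    (h : swap (σ a) (σ b) = swap a b) : Commute (swap a b) σ := by
  rw [Commute, SemiconjBy, mul_swap_eq_swap_mul, h]

theorem sq_swap_mul_eq_one [DecidableEq α] {σ : Perm α} {a b : α}
    (hc : Commute (swap a b) σ) (hσ : σ ^ 2 = 1) : (swap a b * σ) ^ 2 = 1 := by
  rw [hc.mul_pow, hσ, sq, swap_mul_self, one_mul]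

theorem card_fixing_and_sq_eq_one [DecidableEq α] (s : Finset α) :
    Nat.card {σ : Perm α // (∀ x ∈ s, σ x = x) ∧ σ ^ 2 = 1} =
      Nat.card {τ : Perm {x // x ∉ s} // τ ^ 2 = 1} := by
  symm
  refine Nat.card_congr <|
    ((Perm.subtypeEquivSubtypePerm (· ∉ s)).subtypeEquiv fun τ => ?_).trans <|
      (subtypeSubtypeEquivSubtypeInter _ (· ^ 2 = 1)).trans <|
        subtypeEquivRight fun σ => by simp only [not_not]
  rw [Perm.subtypeEquivSubtypePerm_apply_coe, ← map_pow, map_eq_one_iff _ ofSubtype_injective]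

theorem card_apply_eq_and_sq_eq_one [DecidableEq α] (a b : α) :
    Nat.card {σ : Perm α // σ a = b ∧ σ ^ 2 = 1} =
      Nat.card {σ : Perm α // (∀ x ∈ ({a, b} : Finset α), σ x = x) ∧ σ ^ 2 = 1} := by
  refine Nat.card_congr <| (Equiv.mulLeft (swap a b)).subtypeEquiv fun σ => ?_
  simp only [mem_insert, mem_singleton, forall_eq_or_imp, forall_eq, coe_mulLeft]
  constructor
  · rintro ⟨hσa, hσ⟩
    have hσb : σ b = a := by rw [← hσa, ← Perm.mul_apply, ← sq, hσ, one_apply]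
    refine ⟨⟨by rw [Perm.mul_apply, hσa, swap_apply_right],
      by rw [Perm.mul_apply, hσb, swap_apply_left]⟩, sq_swap_mul_eq_one ?_ hσ⟩
    exact commute_swap_of_swap_apply_eq (by rw [hσa, hσb, swap_comm])
  · rintro ⟨⟨hτa, hτb⟩, hτ⟩
    rw [← swap_mul_self_mul a b σ]
    refine ⟨by rw [Perm.mul_apply, hτa, swap_apply_left], sq_swap_mul_eq_one ?_ hτ⟩
    exact commute_swap_of_swap_apply_eq (by rw [hτa, hτb])

theorem card_sq_eq_one_eq_sum_card_apply_eq_and [Fintype α] [DecidableEq α] (a : α) :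
    Nat.card {σ : Perm α // σ ^ 2 = 1} =
      ∑ b, Nat.card {σ : Perm α // σ a = b ∧ σ ^ 2 = 1} := by
  simp only [Nat.card_eq_fintype_card, Fintype.card_subtype]
  rw [card_eq_sum_card_fiberwise (f := fun σ => σ a) (t := univ) (by simp)]
  simp only [filter_filter, and_comm]

theorem card_sq_eq_one_of_card_le_one [Fintype α] (h : Fintype.card α ≤ 1) :
    Nat.card {σ : Perm α // σ ^ 2 = 1} = 1 := by
  have := Fintype.card_le_one_iff_subsingleton.mp h
  exact Nat.card_eq_one_iff_unique.mpr ⟨inferInstance, ⟨⟨1, one_pow 2⟩⟩⟩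

end Equiv.Perm

def numInvolutions : ℕ → ℕ
  | 0 => 1
  | 1 => 1
  | n + 2 => numInvolutions (n + 1) + (n + 1) * numInvolutions n

open Equiv.Perm in
theorem card_sq_eq_one_eq_numInvolutions :
    ∀ (n : ℕ) {α : Type*} [Fintype α] [DecidableEq α], Fintype.card α = n →
      Nat.card {σ : Perm α // σ ^ 2 = 1} = numInvolutions n
  | 0, _, _, _, h => card_sq_eq_one_of_card_le_one (by omega)
  | 1, _, _, _, h => card_sq_eq_one_of_card_le_one h.le
  | n + 2, α, _, _, h => by
    obtain ⟨a⟩ : Nonempty α := Fintype.card_pos_iff.mp (by omega)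
    have fiber (b : α) : Nat.card {σ : Perm α // σ a = b ∧ σ ^ 2 = 1} =
        numInvolutions (n + 2 - #{a, b}) := by
      rw [card_apply_eq_and_sq_eq_one, card_fixing_and_sq_eq_one,
        card_sq_eq_one_eq_numInvolutions _
          (by rw [Fintype.card_subtype_compl, Fintype.card_coe, h])]
    have fiber_ne (b : α) (hb : b ∈ univ.erase a) :
        Nat.card {σ : Perm α // σ a = b ∧ σ ^ 2 = 1} = numInvolutions n := by
      rw [fiber, card_pair (ne_of_mem_erase hb).symm, Nat.add_sub_cancel]
    rw [card_sq_eq_one_eq_sum_card_apply_eq_and a, ← add_sum_erase _ _ (mem_univ a),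
      sum_congr rfl fiber_ne, fiber, sum_const, card_erase_of_mem (mem_univ a), card_univ, h]
    simp [numInvolutions]

theorem iteratedDeriv_succ_id_mul_zero {𝕜 : Type*} [NontriviallyNormedField 𝕜]
    {f : 𝕜 → 𝕜} {n : ℕ} (hf : ContDiffAt 𝕜 (n + 1) f 0) :
    iteratedDeriv (n + 1) (fun x => x * f x) 0 = (n + 1) * iteratedDeriv n f 0 := by
  rw [iteratedDeriv_fun_mul (by fun_prop) hf, sum_eq_single 1]
  · simp [iteratedDeriv_fun_id_zero]
  · intro i _ hi
    simp [iteratedDeriv_fun_id_zero, hi]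
  · simp

theorem deriv_exp_add_sq_div_two :
    deriv (fun u : ℝ => exp (u + u ^ 2 / 2)) =
      fun u => exp (u + u ^ 2 / 2) + u * exp (u + u ^ 2 / 2) := by
  funext u
  have h : HasDerivAt (fun u : ℝ => u + u ^ 2 / 2) (1 + u) u := by
    simpa using (hasDerivAt_id' u).fun_add ((hasDerivAt_pow 2 u).div_const 2)
  rw [h.exp.deriv]
  ring

theorem iteratedDeriv_exp_add_sq_div_two_add_two (n : ℕ) :
    iteratedDeriv (n + 2) (fun u : ℝ => exp (u + u ^ 2 / 2)) 0 =
      iteratedDeriv (n + 1) (fun u : ℝ => exp (u + u ^ 2 / 2)) 0 +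
        (n + 1) * iteratedDeriv n (fun u : ℝ => exp (u + u ^ 2 / 2)) 0 := by
  rw [iteratedDeriv_succ', deriv_exp_add_sq_div_two,
    iteratedDeriv_fun_add (by fun_prop) (by fun_prop),
    iteratedDeriv_succ_id_mul_zero (by fun_prop)]

theorem iteratedDeriv_exp_add_sq_div_two_zero :
    ∀ n : ℕ, iteratedDeriv n (fun u : ℝ => exp (u + u ^ 2 / 2)) 0 = numInvolutions n
  | 0 => by simp [numInvolutions]
  | 1 => by simp [numInvolutions, deriv_exp_add_sq_div_two]
  | n + 2 => by
    rw [iteratedDeriv_exp_add_sq_div_two_add_two, iteratedDeriv_exp_add_sq_div_two_zero n,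
      iteratedDeriv_exp_add_sq_div_two_zero (n + 1), numInvolutions]
    push_cast
    ring

/-- The number of elements in the symmetric group `Sₙ` whose square is the identity
equals `n!` times the coefficient of `uⁿ` in `exp (u + u²/2)`, i.e. it equals the
`n`-th derivative of `u ↦ exp (u + u²/2)` at `0`. -/
theorem symmetricGroup_involution_count (n : ℕ) :
    (Nat.card {g : Equiv.Perm (Fin n) // g ^ 2 = 1} : ℝ) =
      iteratedDeriv n (fun u : ℝ => Real.exp (u + u ^ 2 / 2)) 0 := by
  rw [card_sq_eq_one_eq_numInvolutions n (Fintype.card_fin n),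
    iteratedDeriv_exp_add_sq_div_two_zero]
end

section
/- For partitions lambda, the sum over all partitions of the Schur function s_lambda(x) equals the product over i of (1 - x_i)^{-1} times the product over i < j of (1 - x_i x_j)^{-1}. -/
/-- The Schur function `s_μ(x)`, defined combinatorially as the sum over all semistandard
Young tableaux `T` of shape `μ` (with entries in `ℕ`) of the monomial
`∏_{c ∈ μ} x_{T(c)}`, evaluated at a sequence of real numbers `x`. -/
noncomputable def schurVal (μ : YoungDiagram) (x : ℕ → ℝ) : ℝ :=
  ∑' T : SemistandardYoungTableau μ, ∏ c ∈ μ.cells, x (T c.1 c.2)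

/-!
Knuth's symmetric RSK correspondence matches symmetric `ℕ`-matrices `A` supported on `[0, n)²`
with semistandard tableaux whose entries are `< n`, in such a way that the tableau has `Σᵢ Aᵢₖ`
entries equal to `k`. Summing `∏_c x_{T c}` over tableaux is therefore summing
`∏ᵢ xᵢ ^ Aᵢᵢ * ∏_{i<j} (xᵢ xⱼ) ^ Aᵢⱼ` over all such matrices, a product of geometric series.

We run RSK as a Fomin growth diagram: filling the `n × n` grid square by square with the local
rule produces along its last row a chain of horizontal strips `∅ = λ⁰ ⊆ λ¹ ⊆ ⋯ ⊆ λⁿ` with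
`|λᵏ⁺¹| - |λᵏ|` the `k`-th column sum of `A`, and such a chain is the same thing as a tableau
(`λᵏ` is the shape of its entries `< k`). The local rule can be inverted given the matrix entry,
and the diagram of a symmetric matrix is symmetric, so its last row and last column coincide and
the whole diagram, hence `A`, is recovered from the chain. A finitely supported `x` reduces the
identity to finitely many variables.
-/

open Finset in
theorem YoungDiagram.card_cells_eq_sum_rowLen (μ : YoungDiagram) {n : ℕ}
    (h : ∀ i, n ≤ i → μ.rowLen i = 0) : #μ.cells = ∑ i ∈ range n, μ.rowLen i := by
  refine (card_eq_sum_card_fiberwise fun c hc => ?_).trans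
    (sum_congr rfl fun i _ => (μ.rowLen_eq_card).symm)
  refine mem_coe.2 (mem_range.2 (lt_of_not_ge fun hn => ?_))
  have := YoungDiagram.mem_iff_lt_rowLen.1 (mem_coe.1 hc)
  rw [h c.1 hn] at this
  exact Nat.not_lt_zero _ this

section GeometricSeries

variable {K : Type*} [NormedField K]

theorem HasSum.mul_and_summable_norm {ι ι' : Type*} {f : ι → K} {g : ι' → K} {a b : K}
    (hf : HasSum f a) (hf' : Summable (‖f ·‖)) (hg : HasSum g b) (hg' : Summable (‖g ·‖)) :
    HasSum (fun p : ι × ι' => f p.1 * g p.2) (a * b) ∧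
      Summable (fun p : ι × ι' => ‖f p.1 * g p.2‖) :=
  ⟨hf.mul hg (summable_mul_of_summable_norm' hf' hf.summable hg' hg.summable), by
    simpa only [norm_mul] using hf'.mul_of_nonneg hg' (fun _ => norm_nonneg _)
      fun _ => norm_nonneg _⟩

theorem hasSum_prod_pow_and_summable_norm (α : Type*) [Fintype α] (r : α → K)
    (hr : ∀ a, ‖r a‖ < 1) :
    HasSum (fun m : α → ℕ => ∏ a, r a ^ m a) (∏ a, (1 - r a)⁻¹) ∧
      Summable (fun m : α → ℕ => ‖∏ a, r a ^ m a‖) := by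
  revert r
  refine Fintype.induction_empty_option (P := fun α [Fintype α] => ∀ r : α → K,
    (∀ a, ‖r a‖ < 1) → HasSum (fun m : α → ℕ => ∏ a, r a ^ m a) (∏ a, (1 - r a)⁻¹) ∧
      Summable (fun m : α → ℕ => ‖∏ a, r a ^ m a‖)) ?_ ?_ ?_ α
  · intro α β _ e ih r hr
    let := Fintype.ofEquiv β e.symm
    let E : (α → ℕ) ≃ (β → ℕ) := e.arrowCongr (Equiv.refl ℕ)
    have hE (m : α → ℕ) : ∏ b, r b ^ E m b = ∏ a, r (e a) ^ m a :=
      (Fintype.prod_equiv e _ _ fun a => by simp [E]).symm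
    rw [← Fintype.prod_equiv e (fun a => (1 - r (e a))⁻¹) _ fun _ => rfl,
      ← E.hasSum_iff, ← E.summable_iff]
    simpa only [Function.comp_def, hE] using ih (r ∘ e) (fun a => hr (e a))
  · intro r _
    simpa using (hasSum_unique (fun m : PEmpty → ℕ => ‖∏ a, r a ^ m a‖)).summable
  · intro α _ ih r hr
    let E : ℕ × (α → ℕ) ≃ (Option α → ℕ) := (Equiv.piOptionEquivProd (β := fun _ => ℕ)).symm
    have hE (p : ℕ × (α → ℕ)) : ∏ a, r a ^ E p a = r none ^ p.1 * ∏ a, r (some a) ^ p.2 a :=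
      Fintype.prod_option _
    have hgeom_norm : Summable (fun k : ℕ => ‖r none ^ k‖) := by
      simpa [norm_pow] using summable_geometric_of_lt_one (norm_nonneg _) (hr none)
    obtain ⟨hsum, hnorm⟩ := ih (r ∘ some) (fun a => hr (some a))
    rw [Fintype.prod_option, ← E.hasSum_iff, ← E.summable_iff]
    simpa only [Function.comp_def, hE] using
      (hasSum_geometric_of_norm_lt_one (hr none)).mul_and_summable_norm hgeom_norm hsum hnorm

end GeometricSeries

namespace Littlewood

/-- Partitions are handled as sequences of row lengths; `ν / μ` is a horizontal strip iff the rows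
interlace. -/
def IsHorizontalStrip (μ ν : ℕ → ℕ) : Prop := ∀ i, μ i ≤ ν i ∧ ν (i + 1) ≤ μ i

theorem IsHorizontalStrip.refl {μ : ℕ → ℕ} (hμ : Antitone μ) : IsHorizontalStrip μ μ :=
  fun i => ⟨le_rfl, hμ i.le_succ⟩

theorem IsHorizontalStrip.antitone {μ ν : ℕ → ℕ} (h : IsHorizontalStrip μ ν) : Antitone ν :=
  antitone_nat_of_succ_le fun i => ((h i).2.trans (h i).1)

/-- Fomin's local rule for RSK: the partition at the corner opposite to `μ` of a square with sides
`μ ⊆ ν` and `μ ⊆ ρ` carrying the matrix entry `a`. `shrink` and `shrinkEntry` invert it. -/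
def growth (μ ν ρ : ℕ → ℕ) (a : ℕ) : ℕ → ℕ
  | 0 => max (ν 0) (ρ 0) + a
  | k + 1 => max (ν (k + 1)) (ρ (k + 1)) + (min (ν k) (ρ k) - μ k)

def shrink (ν ρ lam : ℕ → ℕ) : ℕ → ℕ :=
  fun k => min (ν k) (ρ k) - (lam (k + 1) - max (ν (k + 1)) (ρ (k + 1)))

def shrinkEntry (ν ρ lam : ℕ → ℕ) : ℕ := lam 0 - max (ν 0) (ρ 0)

section LocalRule

variable {μ ν ρ lam : ℕ → ℕ}

theorem growth_comm (μ ν ρ : ℕ → ℕ) (a : ℕ) : growth μ ν ρ a = growth μ ρ ν a := by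
  funext k; cases k <;> simp [growth, max_comm, min_comm]

theorem shrink_comm (ν ρ lam : ℕ → ℕ) : shrink ν ρ lam = shrink ρ ν lam := by
  funext k; simp [shrink, max_comm, min_comm]

theorem shrinkEntry_comm (ν ρ lam : ℕ → ℕ) : shrinkEntry ν ρ lam = shrinkEntry ρ ν lam := by
  simp [shrinkEntry, max_comm]

theorem isHorizontalStrip_growth_left (hν : IsHorizontalStrip μ ν) (hρ : IsHorizontalStrip μ ρ)
    (a : ℕ) :
    IsHorizontalStrip ν (growth μ ν ρ a) := by
  intro i
  have := hν i; have := hρ i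
  cases i with
  | zero => simp only [growth]; omega
  | succ k => have := hν k; have := hρ k; simp only [growth]; omega

theorem isHorizontalStrip_growth_right (hν : IsHorizontalStrip μ ν) (hρ : IsHorizontalStrip μ ρ)
    (a : ℕ) :
    IsHorizontalStrip ρ (growth μ ν ρ a) :=
  growth_comm μ ν ρ a ▸ isHorizontalStrip_growth_left hρ hν a

theorem growth_self_left (h : IsHorizontalStrip μ ρ) : growth μ μ ρ 0 = ρ := by
  funext k
  cases k with
  | zero => have := h 0; simp only [growth]; omega
  | succ k => have := h k; have := h (k + 1); simp only [growth]; omega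

theorem isHorizontalStrip_shrink (hν : IsHorizontalStrip ν lam) (hρ : IsHorizontalStrip ρ lam) :
    IsHorizontalStrip (shrink ν ρ lam) ν := by
  intro i
  have := hν i; have := hρ i; have := hν (i + 1); have := hρ (i + 1)
  simp only [shrink]; omega

theorem growth_shrink (hν : IsHorizontalStrip ν lam) (hρ : IsHorizontalStrip ρ lam) :
    growth (shrink ν ρ lam) ν ρ (shrinkEntry ν ρ lam) = lam := by
  funext k
  cases k with
  | zero => have := hν 0; have := hρ 0; simp only [growth, shrinkEntry]; omega
  | succ k =>
    have := hν k; have := hρ k; have := hν (k + 1); have := hρ (k + 1)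
    simp only [growth, shrink]; omega

theorem shrink_growth (hν : IsHorizontalStrip μ ν) (hρ : IsHorizontalStrip μ ρ) (a : ℕ) :
    shrink ν ρ (growth μ ν ρ a) = μ := by
  funext k
  have := hν k; have := hρ k; have := hν (k + 1); have := hρ (k + 1)
  simp only [shrink, growth]; omega

theorem shrinkEntry_growth (μ ν ρ : ℕ → ℕ) (a : ℕ) : shrinkEntry ν ρ (growth μ ν ρ a) = a := by
  simp [shrinkEntry, growth]

end LocalRule

def growthDiagram (A : ℕ → ℕ → ℕ) : ℕ → ℕ → ℕ → ℕ
  | 0, _ => 0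
  | _ + 1, 0 => 0
  | i + 1, j + 1 =>
    growth (growthDiagram A i j) (growthDiagram A i (j + 1)) (growthDiagram A (i + 1) j) (A i j)

section GrowthDiagram

variable (A : ℕ → ℕ → ℕ)

@[simp] theorem growthDiagram_zero_left (j : ℕ) : growthDiagram A 0 j = 0 := by
  cases j <;> rw [growthDiagram]

@[simp] theorem growthDiagram_zero_right (i : ℕ) : growthDiagram A i 0 = 0 := by
  cases i <;> rw [growthDiagram]

theorem growthDiagram_succ_succ (i j : ℕ) :
    growthDiagram A (i + 1) (j + 1) = growth (growthDiagram A i j) (growthDiagram A i (j + 1))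
      (growthDiagram A (i + 1) j) (A i j) := by
  rw [growthDiagram]

theorem isHorizontalStrip_growthDiagram : ∀ i j,
    IsHorizontalStrip (growthDiagram A i j) (growthDiagram A i (j + 1)) ∧
      IsHorizontalStrip (growthDiagram A i j) (growthDiagram A (i + 1) j)
  | 0, 0 => by simp [IsHorizontalStrip]
  | 0, j + 1 => by
    obtain ⟨h₁, h₂⟩ := isHorizontalStrip_growthDiagram 0 j
    rw [growthDiagram_succ_succ]
    exact ⟨by simp [IsHorizontalStrip], isHorizontalStrip_growth_left h₁ h₂ _⟩
  | i + 1, 0 => by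
    obtain ⟨h₁, h₂⟩ := isHorizontalStrip_growthDiagram i 0
    rw [growthDiagram_succ_succ]
    exact ⟨isHorizontalStrip_growth_right h₁ h₂ _, by simp [IsHorizontalStrip]⟩
  | i + 1, j + 1 => by
    obtain ⟨h₁, h₂⟩ := isHorizontalStrip_growthDiagram i (j + 1)
    obtain ⟨h₃, h₄⟩ := isHorizontalStrip_growthDiagram (i + 1) j
    rw [growthDiagram_succ_succ A i (j + 1), growthDiagram_succ_succ A (i + 1) j]
    exact ⟨isHorizontalStrip_growth_right h₁ h₂ _, isHorizontalStrip_growth_left h₃ h₄ _⟩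

theorem growthDiagram_symm (hA : ∀ i j, A i j = A j i) : ∀ i j,
    growthDiagram A i j = growthDiagram A j i
  | 0, j => by simp
  | i + 1, 0 => by simp
  | i + 1, j + 1 => by
    rw [growthDiagram_succ_succ, growthDiagram_succ_succ, growthDiagram_symm hA i j,
      growthDiagram_symm hA i (j + 1), growthDiagram_symm hA (i + 1) j, hA, growth_comm]

theorem growthDiagram_eq_zero : ∀ i j r, min i j ≤ r → growthDiagram A i j r = 0
  | 0, _, _, _ => by simp
  | _ + 1, 0, _, _ => by simp
  | i + 1, j + 1, 0, h => by omega
  | i + 1, j + 1, r + 1, h => by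
    have hmin : min (growthDiagram A i (j + 1) r) (growthDiagram A (i + 1) j r) = 0 := by
      rcases le_total i j with hij | hij
      · simp [growthDiagram_eq_zero i (j + 1) r (by omega)]
      · simp [growthDiagram_eq_zero (i + 1) j r (by omega)]
    rw [growthDiagram_succ_succ, growth, growthDiagram_eq_zero i (j + 1) (r + 1) (by omega),
      growthDiagram_eq_zero (i + 1) j (r + 1) (by omega), hmin]
    simp

theorem growthDiagram_succ_of_col_eq_zero {j : ℕ} (hA : ∀ i, A i j = 0) (i : ℕ) :
    growthDiagram A i (j + 1) = growthDiagram A i j := by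
  induction i with
  | zero => simp
  | succ i ih =>
    rw [growthDiagram_succ_succ, ih, hA]
    exact growth_self_left (isHorizontalStrip_growthDiagram A i j).2

theorem growthDiagram_eq_of_le {n : ℕ} (hA : ∀ i j, n ≤ j → A i j = 0) (i : ℕ) {k : ℕ}
    (hk : n ≤ k) : growthDiagram A i k = growthDiagram A i n := by
  induction k, hk using Nat.le_induction with
  | base => rfl
  | succ k hk ih => rw [growthDiagram_succ_of_col_eq_zero A (fun i => hA i k hk), ih]

end GrowthDiagram

structure IsStripChain (n : ℕ) (c : ℕ → ℕ → ℕ) : Prop where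
  zero : c 0 = 0
  isHorizontalStrip : ∀ k, IsHorizontalStrip (c k) (c (k + 1))
  eq_of_le : ∀ k, n ≤ k → c k = c n

namespace IsStripChain

variable {n : ℕ} {c : ℕ → ℕ → ℕ}

theorem antitone (hc : IsStripChain n c) : ∀ k, Antitone (c k)
  | 0 => by rw [hc.zero]; exact antitone_const
  | k + 1 => (hc.isHorizontalStrip k).antitone

theorem monotone (hc : IsStripChain n c) (i : ℕ) : Monotone (c · i) :=
  monotone_nat_of_le_succ fun k => (hc.isHorizontalStrip k i).1

theorem le_top (hc : IsStripChain n c) (k i : ℕ) : c k i ≤ c n i := by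
  rcases le_total k n with hk | hk
  · exact hc.monotone i hk
  · rw [hc.eq_of_le k hk]

theorem eq_zero_of_le (hc : IsStripChain n c) : ∀ {k r}, k ≤ r → c k r = 0
  | 0, r, _ => by simp [hc.zero]
  | k + 1, r + 1, h => by
    have := (hc.isHorizontalStrip k r).2
    have := hc.eq_zero_of_le (Nat.le_of_succ_le_succ h)
    omega

end IsStripChain

/-- The growth diagram recomputed backwards from its last row and its last column `n`, both
taken equal to `c`. -/
def shrinkDiagram (n : ℕ) (c : ℕ → ℕ → ℕ) (i j : ℕ) : ℕ → ℕ :=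
  if n ≤ i then c j
  else if n ≤ j then c i
  else shrink (shrinkDiagram n c i (j + 1)) (shrinkDiagram n c (i + 1) j)
    (shrinkDiagram n c (i + 1) (j + 1))
termination_by (n - i) + (n - j)

section ShrinkDiagram

variable {n : ℕ} {c : ℕ → ℕ → ℕ}

theorem shrinkDiagram_of_le_left {i : ℕ} (h : n ≤ i) (j : ℕ) : shrinkDiagram n c i j = c j := by
  rw [shrinkDiagram, if_pos h]

theorem shrinkDiagram_of_le_right {i j : ℕ} (hi : i < n) (hj : n ≤ j) :
    shrinkDiagram n c i j = c i := by
  rw [shrinkDiagram, if_neg (by omega), if_pos hj]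

theorem shrinkDiagram_of_lt {i j : ℕ} (hi : i < n) (hj : j < n) :
    shrinkDiagram n c i j = shrink (shrinkDiagram n c i (j + 1)) (shrinkDiagram n c (i + 1) j)
      (shrinkDiagram n c (i + 1) (j + 1)) := by
  rw [shrinkDiagram, if_neg (by omega), if_neg (by omega)]

theorem isHorizontalStrip_shrinkDiagram (hc : IsStripChain n c) (i j : ℕ) :
    IsHorizontalStrip (shrinkDiagram n c i j) (shrinkDiagram n c i (j + 1)) ∧
      IsHorizontalStrip (shrinkDiagram n c i j) (shrinkDiagram n c (i + 1) j) := by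
  by_cases hi : n ≤ i
  · simp only [shrinkDiagram_of_le_left hi, shrinkDiagram_of_le_left (hi.trans i.le_succ)]
    exact ⟨hc.isHorizontalStrip j, .refl (hc.antitone j)⟩
  by_cases hj : n ≤ j
  · rw [shrinkDiagram_of_le_right (by omega) hj, shrinkDiagram_of_le_right (by omega) (by omega)]
    refine ⟨.refl (hc.antitone i), ?_⟩
    by_cases hi' : i + 1 < n
    · rw [shrinkDiagram_of_le_right hi' hj]; exact hc.isHorizontalStrip i
    · rw [shrinkDiagram_of_le_left (by omega), hc.eq_of_le j hj, show n = i + 1 by omega]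
      exact hc.isHorizontalStrip i
  have h₁ := (isHorizontalStrip_shrinkDiagram hc i (j + 1)).2
  have h₂ := (isHorizontalStrip_shrinkDiagram hc (i + 1) j).1
  rw [shrinkDiagram_of_lt (by omega) (by omega)]
  exact ⟨isHorizontalStrip_shrink h₁ h₂, shrink_comm .. ▸ isHorizontalStrip_shrink h₂ h₁⟩
termination_by (n - i) + (n - j)

theorem shrinkDiagram_eq_zero (hc : IsStripChain n c) (i j r : ℕ) (h : min i j ≤ r) :
    shrinkDiagram n c i j r = 0 := by
  by_cases hi : n ≤ i
  · rw [shrinkDiagram_of_le_left hi]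
    by_cases hj : j ≤ r
    · exact hc.eq_zero_of_le hj
    · rw [hc.eq_of_le j (by omega)]; exact hc.eq_zero_of_le (by omega)
  by_cases hj : n ≤ j
  · rw [shrinkDiagram_of_le_right (by omega) hj]; exact hc.eq_zero_of_le (by omega)
  have hmin : min (shrinkDiagram n c i (j + 1) r) (shrinkDiagram n c (i + 1) j r) = 0 := by
    rcases le_total i j with hij | hij
    · simp [shrinkDiagram_eq_zero hc i (j + 1) r (by omega)]
    · simp [shrinkDiagram_eq_zero hc (i + 1) j r (by omega)]
  rw [shrinkDiagram_of_lt (by omega) (by omega), shrink, hmin, Nat.zero_sub]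
termination_by (n - i) + (n - j)

theorem shrinkDiagram_symm (hc : IsStripChain n c) (i j : ℕ) :
    shrinkDiagram n c i j = shrinkDiagram n c j i := by
  by_cases hi : n ≤ i <;> by_cases hj : n ≤ j
  · rw [shrinkDiagram_of_le_left hi, shrinkDiagram_of_le_left hj, hc.eq_of_le i hi,
      hc.eq_of_le j hj]
  · rw [shrinkDiagram_of_le_left hi, shrinkDiagram_of_le_right (by omega) hi]
  · rw [shrinkDiagram_of_le_left hj, shrinkDiagram_of_le_right (by omega) hj]
  · rw [shrinkDiagram_of_lt (i := i) (j := j) (by omega) (by omega),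
      shrinkDiagram_of_lt (i := j) (j := i) (by omega) (by omega),
      shrinkDiagram_symm hc i (j + 1), shrinkDiagram_symm hc (i + 1) j,
      shrinkDiagram_symm hc (i + 1) (j + 1), shrink_comm]
termination_by (n - i) + (n - j)

variable (n c) in
def shrinkMatrix (i j : ℕ) : ℕ :=
  if i < n ∧ j < n then
    shrinkEntry (shrinkDiagram n c i (j + 1)) (shrinkDiagram n c (i + 1) j)
      (shrinkDiagram n c (i + 1) (j + 1))
  else 0

theorem shrinkMatrix_symm (hc : IsStripChain n c) (i j : ℕ) :
    shrinkMatrix n c i j = shrinkMatrix n c j i := by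
  unfold shrinkMatrix
  by_cases h : i < n ∧ j < n
  · rw [if_pos h, if_pos h.symm, shrinkDiagram_symm hc i (j + 1), shrinkDiagram_symm hc (i + 1) j,
      shrinkDiagram_symm hc (i + 1) (j + 1), shrinkEntry_comm]
  · rw [if_neg h, if_neg (h ∘ And.symm)]

theorem shrinkMatrix_eq_zero {i j : ℕ} (h : n ≤ j) : shrinkMatrix n c i j = 0 :=
  if_neg (by omega)

theorem growthDiagram_shrinkMatrix (hc : IsStripChain n c) :
    ∀ i j, i ≤ n → j ≤ n → growthDiagram (shrinkMatrix n c) i j = shrinkDiagram n c i j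
  | 0, j, _, _ => by funext r; simp [shrinkDiagram_eq_zero hc 0 j r]
  | i + 1, 0, _, _ => by funext r; simp [shrinkDiagram_eq_zero hc (i + 1) 0 r]
  | i + 1, j + 1, hi, hj => by
    rw [growthDiagram_succ_succ, growthDiagram_shrinkMatrix hc i j (by omega) (by omega),
      growthDiagram_shrinkMatrix hc i (j + 1) (by omega) hj,
      growthDiagram_shrinkMatrix hc (i + 1) j hi (by omega),
      shrinkDiagram_of_lt (by omega) (by omega), shrinkMatrix, if_pos (by omega)]
    exact growth_shrink (isHorizontalStrip_shrinkDiagram hc i (j + 1)).2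
      (isHorizontalStrip_shrinkDiagram hc (i + 1) j).1

end ShrinkDiagram

section SymmetricMatrices

variable {n : ℕ} {A : ℕ → ℕ → ℕ}

theorem shrinkDiagram_growthDiagram (hA : ∀ i j, A i j = A j i) {i j : ℕ} (hi : i ≤ n)
    (hj : j ≤ n) : shrinkDiagram n (growthDiagram A n) i j = growthDiagram A i j := by
  by_cases hi' : n ≤ i
  · rw [shrinkDiagram_of_le_left hi', show i = n by omega]
  by_cases hj' : n ≤ j
  · rw [shrinkDiagram_of_le_right (by omega) hj', show j = n by omega, growthDiagram_symm A hA]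
  rw [shrinkDiagram_of_lt (by omega) (by omega), shrinkDiagram_growthDiagram hA hi (by omega),
    shrinkDiagram_growthDiagram hA (by omega) hj,
    shrinkDiagram_growthDiagram hA (by omega) (by omega), growthDiagram_succ_succ]
  exact shrink_growth (isHorizontalStrip_growthDiagram A i j).1
    (isHorizontalStrip_growthDiagram A i j).2 _
termination_by (n - i) + (n - j)

theorem isStripChain_growthDiagram (hA : ∀ i j, n ≤ j → A i j = 0) :
    IsStripChain n (growthDiagram A n) where
  zero := growthDiagram_zero_right A n
  isHorizontalStrip k := (isHorizontalStrip_growthDiagram A n k).1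
  eq_of_le _ hk := growthDiagram_eq_of_le A hA n hk

variable (n) in
def SymmMatrix : Type := {A : ℕ → ℕ → ℕ // (∀ i j, A i j = A j i) ∧ ∀ i j, n ≤ j → A i j = 0}

variable (n) in
def StripChain : Type := {c : ℕ → ℕ → ℕ // IsStripChain n c}

def symmMatrixEquivStripChain : SymmMatrix n ≃ StripChain n where
  toFun A := ⟨growthDiagram A.1 n, isStripChain_growthDiagram A.2.2⟩
  invFun c := ⟨shrinkMatrix n c.1, shrinkMatrix_symm c.2, fun _ _ => shrinkMatrix_eq_zero⟩
  left_inv := by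
    rintro ⟨A, hA, hA₀⟩
    refine Subtype.ext (funext₂ fun i j => ?_)
    dsimp only
    by_cases h : i < n ∧ j < n
    · rw [shrinkMatrix, if_pos h, shrinkDiagram_growthDiagram hA (by omega) (by omega),
        shrinkDiagram_growthDiagram hA (by omega) (by omega),
        shrinkDiagram_growthDiagram hA (by omega) (by omega), growthDiagram_succ_succ,
        shrinkEntry_growth]
    · rw [shrinkMatrix, if_neg h]
      rcases not_and_or.1 h with hi | hj
      · rw [hA, hA₀ j i (by omega)]
      · rw [hA₀ i j (by omega)]
  right_inv := by
    rintro ⟨c, hc⟩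
    refine Subtype.ext (funext fun k => ?_)
    dsimp only
    rcases le_total k n with hk | hk
    · rw [growthDiagram_shrinkMatrix hc n k le_rfl hk, shrinkDiagram_of_le_left le_rfl]
    · rw [growthDiagram_eq_of_le _ (fun _ _ => shrinkMatrix_eq_zero) n hk,
        growthDiagram_shrinkMatrix hc n n le_rfl le_rfl, shrinkDiagram_of_le_left le_rfl,
        hc.eq_of_le k hk]

end SymmetricMatrices

section TableauToChain

variable {μ : YoungDiagram} (T : SemistandardYoungTableau μ)

theorem entry_le_entry {i₁ j₁ i₂ j₂ : ℕ} (hi : i₁ ≤ i₂) (hj : j₁ ≤ j₂) (h : (i₂, j₂) ∈ μ) :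
    T i₁ j₁ ≤ T i₂ j₂ :=
  (T.row_weak_of_le hj (μ.up_left_mem hi le_rfl h)).trans (T.col_weak hi h)

def entryLtDiagram (k : ℕ) : YoungDiagram where
  cells := μ.cells.filter fun c => T c.1 c.2 < k
  isLowerSet := by
    intro p q hqp hp
    simp only [Finset.coe_filter, YoungDiagram.mem_cells, Set.mem_ofPred_eq] at hp ⊢
    exact ⟨μ.isLowerSet hqp hp.1, (entry_le_entry T hqp.1 hqp.2 hp.1).trans_lt hp.2⟩

def tableauChain (k i : ℕ) : ℕ := (entryLtDiagram T k).rowLen i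

variable {T}

theorem lt_tableauChain_iff {k i j : ℕ} : j < tableauChain T k i ↔ (i, j) ∈ μ ∧ T i j < k := by
  rw [tableauChain, ← YoungDiagram.mem_iff_lt_rowLen]
  exact Finset.mem_filter

theorem tableauChain_of_le {n k : ℕ} (hT : ∀ c ∈ μ, T c.1 c.2 < n) (hk : n ≤ k) :
    tableauChain T k = μ.rowLen := by
  funext i
  refine eq_of_forall_lt_iff fun j => ?_
  rw [lt_tableauChain_iff, ← YoungDiagram.mem_iff_lt_rowLen]
  exact ⟨And.left, fun h => ⟨h, (hT _ h).trans_le hk⟩⟩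

theorem isStripChain_tableauChain {n : ℕ} (hT : ∀ c ∈ μ, T c.1 c.2 < n) :
    IsStripChain n (tableauChain T) where
  zero := funext fun i => Nat.eq_zero_of_not_pos fun h =>
    Nat.not_lt_zero _ (lt_tableauChain_iff.1 h).2
  isHorizontalStrip k i := by
    refine ⟨le_of_forall_lt fun j hj => ?_, le_of_forall_lt fun j hj => ?_⟩
    · obtain ⟨hcell, hk⟩ := lt_tableauChain_iff.1 hj
      exact lt_tableauChain_iff.2 ⟨hcell, by omega⟩
    · obtain ⟨hcell, hk⟩ := lt_tableauChain_iff.1 hj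
      have := T.col_strict i.lt_add_one hcell
      exact lt_tableauChain_iff.2 ⟨μ.up_left_mem (Nat.le_succ i) le_rfl hcell, by omega⟩
  eq_of_le k hk := by rw [tableauChain_of_le hT hk, tableauChain_of_le hT le_rfl]

end TableauToChain

section ChainToTableau

variable {n : ℕ} {c : ℕ → ℕ → ℕ}

def chainShape (hc : IsStripChain n c) : YoungDiagram where
  cells := (Finset.range n ×ˢ Finset.range (c n 0)).filter fun p => p.2 < c n p.1
  isLowerSet := by
    intro p q hqp hp
    simp only [Finset.coe_filter, Finset.mem_product, Finset.mem_range, Set.mem_ofPred_eq] at hp ⊢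
    have := hc.antitone n hqp.1
    have := hc.antitone n (Nat.zero_le q.1)
    have := hqp.1
    have := hqp.2
    omega

theorem mem_chainShape (hc : IsStripChain n c) {i j : ℕ} :
    (i, j) ∈ chainShape hc ↔ j < c n i := by
  change (i, j) ∈ Finset.filter _ _ ↔ _
  simp only [Finset.mem_filter, Finset.mem_product, Finset.mem_range, and_iff_right_iff_imp]
  intro h
  have := hc.antitone n (Nat.zero_le i)
  refine ⟨lt_of_not_ge fun hi => ?_, by omega⟩
  rw [hc.eq_zero_of_le hi] at h
  omega

open Classical in
noncomputable def chainEntry (c : ℕ → ℕ → ℕ) (i j : ℕ) : ℕ :=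
  if h : ∃ m, j < c (m + 1) i then Nat.find h else 0

theorem chainEntry_lt_iff (hc : IsStripChain n c) {i j : ℕ} (h : j < c n i) (k : ℕ) :
    chainEntry c i j < k ↔ j < c k i := by
  have hex : ∃ m, j < c (m + 1) i := ⟨n, by rwa [hc.eq_of_le (n + 1) n.le_succ]⟩
  rw [chainEntry, dif_pos hex, Nat.find_lt_iff]
  constructor
  · rintro ⟨m, hm, hjm⟩
    exact hjm.trans_le (hc.monotone i hm)
  · intro hk
    cases k with
    | zero => simp [hc.zero] at hk
    | succ k => exact ⟨k, k.lt_succ_self, hk⟩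

theorem chainEntry_eq_zero (hc : IsStripChain n c) {i j : ℕ} (h : c n i ≤ j) :
    chainEntry c i j = 0 :=
  dif_neg fun ⟨m, hm⟩ => (hm.trans_le (hc.le_top (m + 1) i)).not_ge h

noncomputable def chainTableau (hc : IsStripChain n c) :
    SemistandardYoungTableau (chainShape hc) where
  entry := chainEntry c
  row_weak' {i j₁ j₂} hj hcell := by
    rw [mem_chainShape] at hcell
    have h := (chainEntry_lt_iff hc hcell _).1 (chainEntry c i j₂).lt_succ_self
    exact Nat.le_of_lt_succ ((chainEntry_lt_iff hc (hj.trans hcell) _).2 (hj.trans h))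
  col_strict' {i₁ i₂ j} hi hcell := by
    rw [mem_chainShape] at hcell
    set e := chainEntry c i₂ j
    have h : j < c e i₁ := calc
      j < c (e + 1) i₂ := (chainEntry_lt_iff hc hcell _).1 e.lt_succ_self
      _ ≤ c (e + 1) (i₁ + 1) := hc.antitone (e + 1) hi
      _ ≤ c e i₁ := (hc.isHorizontalStrip e i₁).2
    exact (chainEntry_lt_iff hc (hcell.trans_le (hc.antitone n hi.le)) _).2 h
  zeros' hcell := chainEntry_eq_zero hc (not_lt.1 (mt (mem_chainShape hc).2 hcell))

end ChainToTableau

section TableauxEquivChains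

variable {n : ℕ}

variable (n) in
def TableauxBelow : Type :=
  {y : Σ μ : YoungDiagram, SemistandardYoungTableau μ // ∀ c ∈ y.1, y.2 c.1 c.2 < n}

theorem sigma_tableau_ext {μ ν : YoungDiagram} {T : SemistandardYoungTableau μ}
    {T' : SemistandardYoungTableau ν} (h : μ = ν) (hT : ∀ i j, T i j = T' i j) :
    (⟨μ, T⟩ : Σ μ, SemistandardYoungTableau μ) = ⟨ν, T'⟩ := by
  subst h
  rw [SemistandardYoungTableau.ext hT]

noncomputable def tableauxEquivStripChain : TableauxBelow n ≃ StripChain n where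
  toFun y := ⟨tableauChain y.1.2, isStripChain_tableauChain y.2⟩
  invFun c := ⟨⟨chainShape c.2, chainTableau c.2⟩, fun _ h =>
    (chainEntry_lt_iff c.2 ((mem_chainShape c.2).1 h) n).2 ((mem_chainShape c.2).1 h)⟩
  left_inv := by
    rintro ⟨⟨μ, T⟩, hT⟩
    have hc := isStripChain_tableauChain hT
    have hmem {i j : ℕ} : j < tableauChain T n i ↔ (i, j) ∈ μ := by
      rw [tableauChain_of_le hT le_rfl, YoungDiagram.mem_iff_lt_rowLen]
    refine Subtype.ext (sigma_tableau_ext ?_ fun i j => ?_)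
    · ext ⟨i, j⟩
      exact (mem_chainShape hc).trans hmem
    show chainEntry (tableauChain T) i j = T i j
    by_cases hcell : (i, j) ∈ μ
    · refine eq_of_forall_gt_iff fun k => ?_
      rw [chainEntry_lt_iff hc (hmem.2 hcell), lt_tableauChain_iff, and_iff_right hcell]
    · rw [chainEntry_eq_zero hc (not_lt.1 (mt hmem.1 hcell)), T.zeros hcell]
  right_inv := by
    rintro ⟨c, hc⟩
    refine Subtype.ext (funext₂ fun k i => eq_of_forall_lt_iff fun j => ?_)
    show j < tableauChain (chainTableau hc) k i ↔ j < c k i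
    rw [lt_tableauChain_iff, mem_chainShape]
    constructor
    · rintro ⟨hcell, hk⟩
      exact (chainEntry_lt_iff hc hcell k).1 hk
    · intro hk
      have hcell := hk.trans_le (hc.le_top k i)
      exact ⟨hcell, (chainEntry_lt_iff hc hcell k).2 hk⟩

end TableauxEquivChains

section Weights

open Finset

variable {M : Type*} [CommMonoid M]

def chainWeight (x : ℕ → M) (n : ℕ) (c : ℕ → ℕ → ℕ) : M :=
  ∏ k ∈ range n, x k ^ (∑ i ∈ range n, c (k + 1) i - ∑ i ∈ range n, c k i)

theorem sum_growth_add {μ ν ρ : ℕ → ℕ} (hν : IsHorizontalStrip μ ν) (hρ : IsHorizontalStrip μ ρ)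
    (a N : ℕ) :
    ∑ r ∈ range (N + 1), growth μ ν ρ a r + ∑ r ∈ range N, μ r + min (ν N) (ρ N) =
      a + ∑ r ∈ range (N + 1), ν r + ∑ r ∈ range (N + 1), ρ r := by
  induction N with
  | zero => simp only [zero_add, range_one, sum_singleton, range_zero, sum_empty, growth]; omega
  | succ N ih =>
    have := (hν N).1
    have := (hρ N).1
    rw [sum_range_succ (growth μ ν ρ a), sum_range_succ μ, sum_range_succ ν (N + 1),
      sum_range_succ ρ (N + 1), growth]
    omega

theorem sum_growthDiagram_succ_right (A : ℕ → ℕ → ℕ) {N k : ℕ} (hk : k ≤ N) :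
    ∀ i ≤ N + 1, ∑ r ∈ range (N + 1), growthDiagram A i (k + 1) r =
      ∑ r ∈ range (N + 1), growthDiagram A i k r + ∑ i' ∈ range i, A i' k
  | 0, _ => by simp
  | i + 1, hi => by
    obtain ⟨h₁, h₂⟩ := isHorizontalStrip_growthDiagram A i k
    have h := sum_growth_add h₁ h₂ (A i k) N
    rw [← growthDiagram_succ_succ, growthDiagram_eq_zero A i (k + 1) N (by omega),
      Nat.zero_min] at h
    have h₀ := sum_range_succ (growthDiagram A i k) N
    rw [growthDiagram_eq_zero A i k N (by omega)] at h₀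
    have := sum_growthDiagram_succ_right A hk i (by omega)
    rw [sum_range_succ (fun i' => A i' k)]
    omega

theorem chainWeight_growthDiagram (x : ℕ → M) (A : ℕ → ℕ → ℕ) (n : ℕ) :
    chainWeight x n (growthDiagram A n) = ∏ k ∈ range n, x k ^ ∑ i ∈ range n, A i k := by
  refine prod_congr rfl fun k hk => ?_
  obtain ⟨N, rfl⟩ : ∃ N, n = N + 1 := ⟨n - 1, by have := mem_range.1 hk; omega⟩
  rw [sum_growthDiagram_succ_right A (by have := mem_range.1 hk; omega) (N + 1) le_rfl,
    Nat.add_sub_cancel_left]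

theorem prod_entry_eq_chainWeight (x : ℕ → M) {n : ℕ} {μ : YoungDiagram}
    {T : SemistandardYoungTableau μ} (hT : ∀ c ∈ μ, T c.1 c.2 < n) :
    ∏ c ∈ μ.cells, x (T c.1 c.2) = chainWeight x n (tableauChain T) := by
  have hc := isStripChain_tableauChain hT
  have hcard (k : ℕ) : #{c ∈ μ.cells | T c.1 c.2 < k} = ∑ i ∈ range n, tableauChain T k i :=
    (entryLtDiagram T k).card_cells_eq_sum_rowLen fun i hi =>
      (Nat.le_zero.1 ((hc.le_top k i).trans_eq (hc.eq_zero_of_le hi)) : tableauChain T k i = 0)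
  have hfiber (k : ℕ) : #{c ∈ μ.cells | T c.1 c.2 = k} =
      #{c ∈ μ.cells | T c.1 c.2 < k + 1} - #{c ∈ μ.cells | T c.1 c.2 < k} := by
    rw [← card_sdiff_of_subset (monotone_filter_right _ fun _ _ h => Nat.lt_succ_of_lt h)]
    congr 1
    ext c
    simp only [mem_filter, mem_sdiff]
    grind
  rw [chainWeight, ← prod_fiberwise_of_maps_to' (g := fun c => T c.1 c.2)
    fun c hc => mem_range.2 (hT c hc)]
  refine prod_congr rfl fun k _ => ?_
  rw [prod_const, hfiber, hcard, hcard]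

end Weights

section SymmetricIndex

open Finset

/-- Indices of the free entries of a symmetric `n × n` matrix: `inl j` is the diagonal entry
`(j, j)` and `inr ⟨j, i⟩` the entry `(i, j)`, `i < j`. -/
abbrev SymmIdx (n : ℕ) : Type := Fin n ⊕ Σ j : Fin n, Fin j

variable {n : ℕ}

def symmWeight {M : Type*} [Mul M] (x : ℕ → M) : SymmIdx n → M :=
  Sum.elim (fun j => x j) (fun p => x p.2 * x p.1)

def upperEntry (m : SymmIdx n → ℕ) (i j : ℕ) : ℕ :=
  if hj : j < n then
    if hij : i < j then m (.inr ⟨⟨j, hj⟩, ⟨i, hij⟩⟩) else m (.inl ⟨j, hj⟩)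
  else 0

def symmEntries (A : ℕ → ℕ → ℕ) : SymmIdx n → ℕ :=
  Sum.elim (fun j => A j j) (fun p => A p.2 p.1)

def symmIdxEquiv : (SymmIdx n → ℕ) ≃ SymmMatrix n where
  toFun m := ⟨fun i j => upperEntry m (min i j) (max i j),
    fun i j => by dsimp only; rw [min_comm, max_comm],
    fun i j hj => dif_neg (not_lt.2 (le_max_of_le_right hj))⟩
  invFun A := symmEntries A.1
  left_inv m := by
    funext t
    rcases t with j | ⟨j, i⟩
    · simp [symmEntries, upperEntry]
    · have : (i : ℕ) < j := i.isLt
      show upperEntry m (min i j) (max i j) = _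
      rw [min_eq_left this.le, max_eq_right this.le, upperEntry, dif_pos j.isLt, dif_pos this]
  right_inv := by
    rintro ⟨A, hA, hA₀⟩
    refine Subtype.ext (funext₂ fun i j => ?_)
    show upperEntry (symmEntries A) (min i j) (max i j) = A i j
    wlog hij : i ≤ j generalizing i j
    · rw [min_comm, max_comm, hA i j]; exact this j i (by omega)
    rw [min_eq_left hij, max_eq_right hij, upperEntry]
    split_ifs with hj hij'
    · rfl
    · rw [show i = j by omega]; rfl
    · exact (hA₀ i j (by omega)).symm

theorem prod_pow_sum_symm {M : Type*} [CommMonoid M] (x : ℕ → M) {A : ℕ → ℕ → ℕ}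
    (hA : ∀ i j, A i j = A j i) (n : ℕ) :
    ∏ k ∈ range n, x k ^ ∑ i ∈ range n, A i k =
      ∏ j ∈ range n, (x j ^ A j j * ∏ i ∈ range j, (x i * x j) ^ A i j) := by
  induction n with
  | zero => simp
  | succ n ih =>
    have hrow : (∏ k ∈ range n, x k ^ A n k) * x n ^ ∑ i ∈ range n, A i n =
        ∏ i ∈ range n, (x i * x n) ^ A i n := by
      rw [← prod_pow_eq_pow_sum, ← prod_mul_distrib]
      exact prod_congr rfl fun i _ => by rw [mul_pow, hA]
    rw [prod_range_succ, prod_range_succ, ← ih, ← hrow]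
    simp only [sum_range_succ, pow_add, prod_mul_distrib]
    ac_rfl

theorem prod_symmWeight_pow {M : Type*} [CommMonoid M] (x : ℕ → M) (A : ℕ → ℕ → ℕ) :
    ∏ t : SymmIdx n, symmWeight x t ^ symmEntries A t =
      ∏ j ∈ range n, (x j ^ A j j * ∏ i ∈ range j, (x i * x j) ^ A i j) := by
  rw [Fintype.prod_sum_type, Fintype.prod_sigma, ← prod_mul_distrib,
    ← Fin.prod_univ_eq_prod_range]
  refine prod_congr rfl fun j _ => ?_
  simp only [symmWeight, symmEntries, Sum.elim_inl, Sum.elim_inr]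
  rw [Fin.prod_univ_eq_prod_range (fun i => (x i * x j) ^ A i j)]

end SymmetricIndex

noncomputable def symmRSK {n : ℕ} : (SymmIdx n → ℕ) ≃ TableauxBelow n :=
  symmIdxEquiv.trans (symmMatrixEquivStripChain.trans tableauxEquivStripChain.symm)

section Assembly

variable {K : Type*} [NormedField K] {n : ℕ} {x : ℕ → K}

theorem norm_symmWeight_lt_one (hx : ∀ i, ‖x i‖ < 1) (t : SymmIdx n) : ‖symmWeight x t‖ < 1 := by
  rcases t with j | ⟨j, i⟩
  · exact hx j
  · rw [symmWeight, Sum.elim_inr, norm_mul]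
    exact mul_lt_one_of_nonneg_of_lt_one_left (norm_nonneg _) (hx _) (hx _).le

theorem prod_entry_symmRSK (m : SymmIdx n → ℕ) :
    ∏ c ∈ (symmRSK m).1.1.cells, x ((symmRSK m).1.2 c.1 c.2) = ∏ t, symmWeight x t ^ m t := by
  set A := symmIdxEquiv m
  have hchain : tableauChain (symmRSK m).1.2 = growthDiagram A.1 n :=
    congrArg Subtype.val (tableauxEquivStripChain.apply_symm_apply _)
  rw [prod_entry_eq_chainWeight x (symmRSK m).2, hchain,
    chainWeight_growthDiagram, prod_pow_sum_symm x A.2.1, ← prod_symmWeight_pow,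
    show symmEntries A.1 = m from symmIdxEquiv.symm_apply_apply m]

theorem hasSum_prod_entry (hx : ∀ i, ‖x i‖ < 1) (hx₀ : ∀ i, n ≤ i → x i = 0) :
    HasSum (fun y : Σ μ, SemistandardYoungTableau μ => ∏ c ∈ y.1.cells, x (y.2 c.1 c.2))
      (∏ t : SymmIdx n, (1 - symmWeight x t)⁻¹) := by
  have hsupp : Function.support (fun y : Σ μ, SemistandardYoungTableau μ =>
      ∏ c ∈ y.1.cells, x (y.2 c.1 c.2)) ⊆ {y | ∀ c ∈ y.1, y.2 c.1 c.2 < n} := by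
    intro y hy c hc
    by_contra h
    exact hy (Finset.prod_eq_zero ((YoungDiagram.mem_cells c).2 hc) (hx₀ _ (not_lt.1 h)))
  refine (hasSum_subtype_iff_of_support_subset hsupp).1 (symmRSK.hasSum_iff.1 ?_)
  convert (hasSum_prod_pow_and_summable_norm _ _ (norm_symmWeight_lt_one hx)).1 using 1
  exact funext prod_entry_symmRSK

theorem prod_one_sub_symmWeight_inv (hx₀ : ∀ i, n ≤ i → x i = 0) :
    ∏ t : SymmIdx n, (1 - symmWeight x t)⁻¹ =
      (∏' i : ℕ, (1 - x i)⁻¹) * ∏' p : {p : ℕ × ℕ // p.1 < p.2}, (1 - x p.1.1 * x p.1.2)⁻¹ := by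
  rw [Fintype.prod_sum_type]
  congr 1
  · rw [tprod_eq_prod (s := Finset.range n) fun i hi => by
      rw [hx₀ i (by simpa using hi)]; simp]
    exact Fin.prod_univ_eq_prod_range (fun i => (1 - x i)⁻¹) n
  · let g : (Σ j : Fin n, Fin j) → {p : ℕ × ℕ // p.1 < p.2} := fun p => ⟨(p.2, p.1), p.2.isLt⟩
    have hg : Function.Injective g := by
      rintro ⟨j, i⟩ ⟨j', i'⟩ h
      simp only [g, Subtype.mk.injEq, Prod.mk.injEq] at h
      obtain rfl := Fin.ext h.2
      obtain rfl := Fin.ext h.1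
      rfl
    have hsupp : Function.mulSupport
        (fun p : {p : ℕ × ℕ // p.1 < p.2} => (1 - x p.1.1 * x p.1.2)⁻¹) ⊆ Set.range g := by
      rintro ⟨⟨i, j⟩, hij⟩ h
      have hj : j < n := by
        by_contra hj
        exact h (by simp [hx₀ j (not_lt.1 hj)])
      exact ⟨⟨⟨j, hj⟩, ⟨i, hij⟩⟩, rfl⟩
    rw [← hg.tprod_eq hsupp, tprod_fintype]
    rfl

end Assembly

end Littlewood

/-- The identity `∑_λ s_λ(x) = ∏_i (1 - x_i)⁻¹ · ∏_{i<j} (1 - x_i x_j)⁻¹`, where the sum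
is over all partitions `λ` (including the empty one), stated for real variables `x`
with finitely many nonzero entries, all of absolute value less than `1` (such values
determine the underlying identity of formal power series in infinitely many variables). -/
theorem sum_schur_eq (x : ℕ → ℝ) (hfin : (Function.support x).Finite)
    (hx : ∀ i, |x i| < 1) :
    ∑' μ : YoungDiagram, schurVal μ x =
      (∏' i : ℕ, (1 - x i)⁻¹) *
        ∏' p : {p : ℕ × ℕ // p.1 < p.2}, (1 - x (p : ℕ × ℕ).1 * x (p : ℕ × ℕ).2)⁻¹ := by
  obtain ⟨N, hN⟩ := hfin.bddAbove
  have hx₀ (i : ℕ) (hi : N + 1 ≤ i) : x i = 0 :=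
    Function.notMem_support.1 fun h => by have := hN h; omega
  have hsum := Littlewood.hasSum_prod_entry (fun i => (Real.norm_eq_abs (x i)).trans_lt (hx i)) hx₀
  rw [← Littlewood.prod_one_sub_symmWeight_inv hx₀, ← hsum.tsum_eq, hsum.summable.tsum_sigma]
  rfl
end

section
/- For any q with |q| > 1, the following formal power series identity in u holds: (prod_{i >= 1} (1 + u/q^i)) / (prod_{i >= 1} (1 - u^2/q^i)) = sum_{n >= 0} u^n q^{binom(n,2)} sum_{r=0}^{floor(n/2)} 1/(q^{r(2n-3r)} gamma_r gamma_{n-2r}). -/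
/-!
Both products are Euler's: with `[n]! = (q - 1)(q² - 1) ⋯ (qⁿ - 1)`,
`∏ (1 + v/qⁱ) = ∑ vⁿ / [n]!` and `∏ (1 - v/qⁱ)⁻¹ = ∑ q^(n choose 2) vⁿ / [n]!`.
Each series `F` satisfies a `q`-difference equation, `F v = (1 + v/q) F (v/q)` resp.
`(1 - v/q) F v = F (v/q)`, read off from the recursion of its coefficients; iterating it `N` times
and letting `v/q^N → 0` (where `F → 1` by uniform convergence) gives the product. The quotient
is then the Cauchy product of the first series at `u` with the second at `u²`, and the
coefficient of `uⁿ` matches because `(m + 2r choose 2) = r(2m + r) + 2 (r choose 2) + (m choose 2)`.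
-/

open Filter Finset Topology

noncomputable def glGamma (q : ℝ) (j : ℕ) : ℝ :=
  q ^ j.choose 2 * ∏ i ∈ Finset.range j, (q ^ (i + 1) - 1)

namespace QSeries

section PowerSeries

variable {c : ℕ → ℝ}

lemma summable_norm_mul_pow_of_ratio {ρ : ℕ → ℝ} {l v : ℝ} (hc : ∀ n, c (n + 1) = ρ n * c n)
    (hρ : Tendsto ρ atTop (𝓝 l)) (hlv : |l * v| < 1) :
    Summable fun n => ‖c n * v ^ n‖ := by
  obtain ⟨r, hlr, hr⟩ := exists_between hlv
  refine summable_of_ratio_norm_eventually_le hr ?_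
  have hρv : Tendsto (fun n => |ρ n * v|) atTop (𝓝 |l * v|) := (hρ.mul_const v).abs
  filter_upwards [hρv.eventually (gt_mem_nhds hlr)] with n hn
  have : ‖c (n + 1) * v ^ (n + 1)‖ = |ρ n * v| * ‖c n * v ^ n‖ := by
    rw [hc, pow_succ, Real.norm_eq_abs, Real.norm_eq_abs, ← abs_mul]
    ring_nf
  rw [norm_norm, norm_norm, this]
  exact mul_le_mul_of_nonneg_right hn.le (norm_nonneg _)

lemma tendsto_tsum_mul_pow_nhds_zero (hc : Summable fun n => ‖c n‖) :
    Tendsto (fun v => ∑' n, c n * v ^ n) (𝓝 0) (𝓝 (c 0)) := by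
  have hcont : ContinuousOn (fun v => ∑' n, c n * v ^ n) (Set.Icc (-1) 1) := by
    refine continuousOn_tsum (fun n => by fun_prop) hc fun n v hv => ?_
    rw [norm_mul, norm_pow]
    exact mul_le_of_le_one_right (norm_nonneg _)
      (pow_le_one₀ (norm_nonneg _) (abs_le.mpr hv))
  have h0 : ∑' n, c n * (0 : ℝ) ^ n = c 0 := by
    rw [tsum_eq_single 0 fun n hn => by simp [hn]]
    simp
  have hI : Set.Icc (-1 : ℝ) 1 ∈ 𝓝 0 := Icc_mem_nhds (by norm_num) one_pos
  simpa [h0] using (hcont.continuousAt hI).tendsto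

lemma tsum_mul_pow_eq_of_succ {v w x y : ℝ} (hw : Summable fun n => c n * w ^ n)
    (hy : Summable fun n => c n * y ^ n)
    (h : ∀ n, c (n + 1) * v ^ (n + 1) = c (n + 1) * w ^ (n + 1) + x * (c n * y ^ n)) :
    ∑' n, c n * v ^ n = ∑' n, c n * w ^ n + x * ∑' n, c n * y ^ n := by
  have hw' : Summable fun n => c (n + 1) * w ^ (n + 1) :=
    (summable_nat_add_iff (f := fun n => c n * w ^ n) 1).mpr hw
  have hv : Summable fun n => c n * v ^ n :=
    (summable_nat_add_iff (f := fun n => c n * v ^ n) 1).mp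
      ((hw'.add (hy.mul_left x)).congr fun n => (h n).symm)
  rw [hv.tsum_eq_zero_add, hw.tsum_eq_zero_add, tsum_congr h,
    hw'.tsum_add (hy.mul_left x), tsum_mul_left]
  simp only [pow_zero]
  ring

lemma tsum_mul_tsum_pow_two {a b : ℕ → ℝ} {u : ℝ} (ha : Summable fun n => ‖a n * u ^ n‖)
    (hb : Summable fun r => ‖b r * (u ^ 2) ^ r‖) :
    (∑' n, a n * u ^ n) * ∑' r, b r * (u ^ 2) ^ r =
      ∑' n, u ^ n * ∑ r ∈ range (n / 2 + 1), a (n - 2 * r) * b r := by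
  have hinj : Function.Injective (2 * · : ℕ → ℕ) := fun _ _ h => by simpa using h
  -- the series in `u²` as a power series in `u`, with vanishing odd coefficients
  set g := Function.extend (2 * · : ℕ → ℕ) (fun r => b r * (u ^ 2) ^ r) 0
  have hg : Summable fun k => ‖g k‖ := by
    have : (fun k => ‖g k‖) =
        Function.extend (2 * · : ℕ → ℕ) (fun r => ‖b r * (u ^ 2) ^ r‖) 0 := by
      funext k
      simp only [g, Function.apply_extend norm]
      congr 1
      funext; simp
    rwa [this, summable_extend_zero hinj]
  rw [← tsum_extend_zero hinj (fun r => b r * (u ^ 2) ^ r),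
    tsum_mul_tsum_eq_tsum_sum_range_of_summable_norm ha hg]
  refine tsum_congr fun n => ?_
  rw [mul_sum]
  symm
  refine sum_of_injOn (fun r => n - 2 * r) ?_ ?_ ?_ ?_
  · intro r hr s hs hrs
    simp only [coe_range, Set.mem_Iio] at hr hs hrs
    omega
  · intro r hr
    simp only [coe_range, Set.mem_Iio] at hr ⊢
    omega
  · intro k hk hk'
    simp only [g]
    rw [Function.extend_apply' _ _ _ ?_, Pi.zero_apply, mul_zero]
    rintro ⟨r, hr⟩
    refine hk' ⟨r, ?_, ?_⟩ <;> simp only [mem_coe, mem_range] at hk ⊢ <;> omega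
  · intro r hr
    have h2r : 2 * r ≤ n := by simp only [mem_range] at hr; omega
    simp only [Nat.sub_sub_self h2r, g, hinj.extend_apply]
    rw [← pow_mul, ← Nat.sub_add_cancel h2r, pow_add, Nat.sub_add_cancel h2r]
    ring

end PowerSeries

noncomputable def prodPowSubOne (q : ℝ) (n : ℕ) : ℝ := ∏ i ∈ range n, (q ^ (i + 1) - 1)

noncomputable def eulerCoeff (q : ℝ) (n : ℕ) : ℝ := (prodPowSubOne q n)⁻¹

noncomputable def eulerInvCoeff (q : ℝ) (n : ℕ) : ℝ := q ^ n.choose 2 / prodPowSubOne q n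

noncomputable def eulerSeries (q v : ℝ) : ℝ := ∑' n, eulerCoeff q n * v ^ n

noncomputable def eulerInvSeries (q v : ℝ) : ℝ := ∑' n, eulerInvCoeff q n * v ^ n

lemma glGamma_eq_mul_prodPowSubOne (q : ℝ) (j : ℕ) :
    glGamma q j = q ^ j.choose 2 * prodPowSubOne q j := rfl

@[simp] lemma eulerCoeff_zero (q : ℝ) : eulerCoeff q 0 = 1 := by
  simp [eulerCoeff, prodPowSubOne]

@[simp] lemma eulerInvCoeff_zero (q : ℝ) : eulerInvCoeff q 0 = 1 := by
  simp [eulerInvCoeff, prodPowSubOne]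

lemma prodPowSubOne_succ (q : ℝ) (n : ℕ) :
    prodPowSubOne q (n + 1) = prodPowSubOne q n * (q ^ (n + 1) - 1) :=
  prod_range_succ _ _

lemma eulerCoeff_succ (q : ℝ) (n : ℕ) :
    eulerCoeff q (n + 1) = (q ^ (n + 1) - 1)⁻¹ * eulerCoeff q n := by
  rw [eulerCoeff, eulerCoeff, prodPowSubOne_succ, mul_inv, mul_comm]

lemma eulerInvCoeff_succ (q : ℝ) (n : ℕ) :
    eulerInvCoeff q (n + 1) = q ^ n / (q ^ (n + 1) - 1) * eulerInvCoeff q n := by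
  rw [eulerInvCoeff, eulerInvCoeff, prodPowSubOne_succ, Nat.choose_succ_succ,
    Nat.choose_one_right, pow_add]
  simp only [div_eq_mul_inv, mul_inv]
  ring

lemma choose_two_add_two_mul (m r : ℕ) :
    (m + 2 * r).choose 2 = r * (2 * m + r) + r.choose 2 + r.choose 2 + m.choose 2 := by
  apply Nat.cast_injective (R := ℚ)
  push_cast [Nat.cast_choose_two]
  ring

lemma eulerCoeff_mul_eulerInvCoeff {q : ℝ} (hq : q ≠ 0) {n r : ℕ} (h : 2 * r ≤ n) :
    eulerCoeff q (n - 2 * r) * eulerInvCoeff q r =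
      q ^ n.choose 2 * (1 / (q ^ (r * (2 * n - 3 * r)) * glGamma q r * glGamma q (n - 2 * r))) := by
  obtain ⟨m, rfl⟩ : ∃ m, n = m + 2 * r := ⟨n - 2 * r, by omega⟩
  rw [show m + 2 * r - 2 * r = m by omega, show 2 * (m + 2 * r) - 3 * r = 2 * m + r by omega,
    choose_two_add_two_mul, glGamma_eq_mul_prodPowSubOne, glGamma_eq_mul_prodPowSubOne,
    eulerCoeff, eulerInvCoeff]
  simp only [pow_add, mul_inv, div_eq_mul_inv]
  field_simp

section

variable {q : ℝ} (hq : 1 < |q|)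
include hq

lemma ne_zero_of_one_lt_abs : q ≠ 0 :=
  abs_pos.mp (zero_lt_one.trans hq)

lemma abs_inv_lt_one_of_one_lt_abs : |q⁻¹| < 1 := by
  rw [abs_inv]
  exact inv_lt_one_of_one_lt₀ hq

lemma tendsto_inv_pow_nhds_zero : Tendsto (fun n : ℕ => q⁻¹ ^ n) atTop (𝓝 0) :=
  tendsto_pow_atTop_nhds_zero_of_abs_lt_one (abs_inv_lt_one_of_one_lt_abs hq)

lemma pow_succ_sub_one_ne_zero (n : ℕ) : q ^ (n + 1) - 1 ≠ 0 := by
  rw [sub_ne_zero]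
  intro h
  have := congrArg abs h
  rw [abs_pow, abs_one] at this
  exact (one_lt_pow₀ hq n.succ_ne_zero).ne' this

lemma tendsto_pow_div_pow_succ_sub_one :
    Tendsto (fun n : ℕ => q ^ n / (q ^ (n + 1) - 1)) atTop (𝓝 q⁻¹) := by
  have hq0 := ne_zero_of_one_lt_abs hq
  have hlim : Tendsto (fun n : ℕ => (q - q⁻¹ ^ n)⁻¹) atTop (𝓝 (q - 0)⁻¹) :=
    ((tendsto_inv_pow_nhds_zero hq).const_sub q).inv₀ (by simpa using hq0)
  rw [sub_zero] at hlim
  refine hlim.congr fun n => ?_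
  rw [pow_succ, inv_pow]
  field_simp

lemma tendsto_inv_pow_succ_sub_one :
    Tendsto (fun n : ℕ => (q ^ (n + 1) - 1)⁻¹) atTop (𝓝 0) := by
  have hq0 := ne_zero_of_one_lt_abs hq
  have hlim := (tendsto_inv_pow_nhds_zero hq).mul (tendsto_pow_div_pow_succ_sub_one hq)
  rw [zero_mul] at hlim
  refine hlim.congr fun n => ?_
  rw [inv_pow, ← div_eq_inv_mul, div_div_cancel_left' (pow_ne_zero n hq0)]

lemma tendsto_div_pow_nhds_zero (v : ℝ) : Tendsto (fun N : ℕ => v / q ^ N) atTop (𝓝 0) := by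
  simpa [div_eq_mul_inv] using (tendsto_inv_pow_nhds_zero hq).const_mul v

lemma summable_div_pow_succ (v : ℝ) : Summable fun i : ℕ => v / q ^ (i + 1) := by
  simpa [pow_succ, div_eq_mul_inv, mul_assoc] using
    (summable_geometric_of_abs_lt_one (abs_inv_lt_one_of_one_lt_abs hq)).mul_left (v * q⁻¹)

lemma abs_div_pow_le (v : ℝ) (N : ℕ) : |v / q ^ N| ≤ |v| := by
  rw [abs_div, abs_pow]
  exact div_le_self (abs_nonneg v) (one_le_pow₀ hq.le)

lemma summable_eulerCoeff (v : ℝ) : Summable fun n => ‖eulerCoeff q n * v ^ n‖ :=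
  summable_norm_mul_pow_of_ratio (eulerCoeff_succ q) (tendsto_inv_pow_succ_sub_one hq)
    (by simp)

lemma summable_eulerInvCoeff {v : ℝ} (hv : |v| < |q|) :
    Summable fun n => ‖eulerInvCoeff q n * v ^ n‖ :=
  summable_norm_mul_pow_of_ratio (eulerInvCoeff_succ q) (tendsto_pow_div_pow_succ_sub_one hq)
    (by rw [abs_mul, abs_inv, inv_mul_lt_iff₀ (by linarith), mul_one]; exact hv)

lemma eulerSeries_eq_mul (v : ℝ) : eulerSeries q v = (1 + v / q) * eulerSeries q (v / q) := by
  have hq0 := ne_zero_of_one_lt_abs hq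
  have hs := (summable_eulerCoeff hq (v / q)).of_norm
  have h := tsum_mul_pow_eq_of_succ hs hs (v := v) (x := v / q) fun n => ?_
  · rw [eulerSeries, eulerSeries]
    linear_combination h
  have := pow_succ_sub_one_ne_zero hq n
  rw [eulerCoeff_succ, div_pow, div_pow]
  field_simp
  ring

lemma eulerInvSeries_eq_mul {v : ℝ} (hv : |v| < |q|) :
    (1 - v / q) * eulerInvSeries q v = eulerInvSeries q (v / q) := by
  have hq0 := ne_zero_of_one_lt_abs hq
  have hvq : |v / q| < |q| := by simpa using (abs_div_pow_le hq v 1).trans_lt hv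
  have h := tsum_mul_pow_eq_of_succ (summable_eulerInvCoeff hq hvq).of_norm
    (summable_eulerInvCoeff hq hv).of_norm (v := v) (x := v / q) fun n => ?_
  · rw [eulerInvSeries, eulerInvSeries]
    linear_combination h
  have := pow_succ_sub_one_ne_zero hq n
  rw [eulerInvCoeff_succ, div_pow]
  field_simp
  ring

lemma eulerSeries_eq_prod_mul (v : ℝ) (N : ℕ) :
    eulerSeries q v = (∏ i ∈ range N, (1 + v / q ^ (i + 1))) * eulerSeries q (v / q ^ N) := by
  induction N with
  | zero => simp
  | succ N ih =>
    rw [ih, eulerSeries_eq_mul hq (v / q ^ N), prod_range_succ, div_div, ← pow_succ]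
    ring

lemma eulerInvSeries_mul_prod {v : ℝ} (hv : |v| < |q|) (N : ℕ) :
    eulerInvSeries q v * ∏ i ∈ range N, (1 - v / q ^ (i + 1)) = eulerInvSeries q (v / q ^ N) := by
  induction N with
  | zero => simp
  | succ N ih =>
    rw [prod_range_succ, ← mul_assoc, ih, mul_comm, pow_succ, ← div_div,
      eulerInvSeries_eq_mul hq ((abs_div_pow_le hq v N).trans_lt hv)]

lemma tendsto_eulerSeries_div_pow (v : ℝ) :
    Tendsto (fun N : ℕ => eulerSeries q (v / q ^ N)) atTop (𝓝 1) := by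
  have h := tendsto_tsum_mul_pow_nhds_zero (by simpa using summable_eulerCoeff hq 1)
  rw [eulerCoeff_zero] at h
  exact h.comp (tendsto_div_pow_nhds_zero hq v)

lemma tendsto_eulerInvSeries_div_pow (v : ℝ) :
    Tendsto (fun N : ℕ => eulerInvSeries q (v / q ^ N)) atTop (𝓝 1) := by
  have h := tendsto_tsum_mul_pow_nhds_zero
    (by simpa using summable_eulerInvCoeff hq (v := 1) (by simpa using hq))
  rw [eulerInvCoeff_zero] at h
  exact h.comp (tendsto_div_pow_nhds_zero hq v)

theorem hasProd_one_add_div_pow (v : ℝ) :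
    HasProd (fun i : ℕ => 1 + v / q ^ (i + 1)) (eulerSeries q v) := by
  have hmul : Multipliable fun i : ℕ => 1 + v / q ^ (i + 1) :=
    Real.multipliable_one_add_of_summable (summable_div_pow_succ hq v)
  have hlim := hmul.hasProd.tendsto_prod_nat.mul (tendsto_eulerSeries_div_pow hq v)
  simp only [← eulerSeries_eq_prod_mul hq, mul_one, tendsto_const_nhds_iff] at hlim
  exact hlim ▸ hmul.hasProd

theorem hasProd_one_sub_div_pow {v : ℝ} (hv : |v| < |q|) :
    HasProd (fun i : ℕ => 1 - v / q ^ (i + 1)) (eulerInvSeries q v)⁻¹ := by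
  have hmul : Multipliable fun i : ℕ => 1 - v / q ^ (i + 1) := by
    simpa only [sub_eq_add_neg] using
      Real.multipliable_one_add_of_summable (summable_div_pow_succ hq v).neg
  have hlim := hmul.hasProd.tendsto_prod_nat.const_mul (eulerInvSeries q v)
  simp only [eulerInvSeries_mul_prod hq hv] at hlim
  have h1 := tendsto_nhds_unique (tendsto_eulerInvSeries_div_pow hq v) hlim
  exact (eq_inv_of_mul_eq_one_right h1.symm) ▸ hmul.hasProd

end

end QSeries

open QSeries

/-- The power series identity
`∏_{i ≥ 1} (1 + u/qⁱ) / ∏_{i ≥ 1} (1 - u²/qⁱ)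
  = ∑_{n ≥ 0} uⁿ q^(n choose 2) ∑_{r=0}^{⌊n/2⌋} 1/(q^{r(2n-3r)} γ_r γ_{n-2r})`,
stated as a convergent identity of real numbers for `|q| > 1` and `|u| < 1` (which
determines the underlying formal power series identity in `u`). -/
theorem gl_even_q_series_identity (q u : ℝ) (hq : 1 < |q|) (hu : |u| < 1) :
    (∏' i : ℕ, (1 + u / q ^ (i + 1))) / (∏' i : ℕ, (1 - u ^ 2 / q ^ (i + 1))) =
      ∑' n : ℕ, u ^ n * q ^ n.choose 2 *
        ∑ r ∈ Finset.range (n / 2 + 1),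
          1 / (q ^ (r * (2 * n - 3 * r)) * glGamma q r * glGamma q (n - 2 * r)) := by
  have hu2 : |u ^ 2| < |q| := by
    rw [abs_pow]
    nlinarith [abs_nonneg u]
  rw [(hasProd_one_add_div_pow hq u).tprod_eq, (hasProd_one_sub_div_pow hq hu2).tprod_eq,
    div_inv_eq_mul, eulerSeries, eulerInvSeries,
    tsum_mul_tsum_pow_two (summable_eulerCoeff hq u) (summable_eulerInvCoeff hq hu2)]
  refine tsum_congr fun n => ?_
  rw [mul_assoc, mul_sum _ _ (q ^ n.choose 2)]
  congr 1
  exact sum_congr rfl fun r hr =>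
    eulerCoeff_mul_eulerInvCoeff (ne_zero_of_one_lt_abs hq) (by simp only [mem_range] at hr; omega)
end

section
/- For any q with |q| > 1, the following formal power series identity in u holds: (prod_{i >= 1} (1 + u/q^i)^2) / (prod_{i >= 1} (1 - u^2/q^i)) = sum_{n >= 0} u^n q^{binom(n,2)} sum_{r=0}^{n} 1/(gamma_r gamma_{n-r}). -/
open Finset Filter Topology

/-!
Put `P_r = (q - 1)(q² - 1) ⋯ (q^r - 1)`, so that `γ_r = q^(r choose 2) P_r`. Since
`(r + s choose 2) = (r choose 2) + (s choose 2) + r s`, the `n`-th coefficient of the right-hand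
side is `c_n = ∑_{r + s = n} d_{r,s}` with `d_{r,s} = q^(r s) / (P_r P_s)`. The Pascal-type relation
`(q^(r+1) - 1) d_{r+1,s} = q^s d_{r,s}` yields a four-term recurrence for `c_n`, which says that
`F(v) = ∑ c_n vⁿ` satisfies `(1 - v)(1 - q v²) F(q v) = (1 + v) F(v)`. Multiplying by `1 + v` and
putting `v = u/q` gives `(1 - u²/q)(1 - u²/q²) F(u) = (1 + u/q)² F(u/q)`; iterating it `N` times and
letting `N → ∞` produces the two infinite products, because `F(u/q^N) → F(0) = 1`. For the
convergence, `|P_r| ≥ κ |q|^(r+1 choose 2)` with `κ = ∏ (1 - |q|^-k) > 0` keeps `d_{r,s}` bounded.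
-/

namespace GLOddSeries

lemma add_choose_two (r s : ℕ) : (r + s).choose 2 = r.choose 2 + s.choose 2 + r * s := by
  simp [Nat.add_choose_eq, Nat.sum_antidiagonal_succ, add_comm, add_left_comm, add_assoc, mul_comm]

lemma mul_le_choose_two_add_choose_two (r s : ℕ) :
    r * s ≤ (r + 1).choose 2 + (s + 1).choose 2 := by
  have hr := Nat.add_one_mul_choose_eq r 1
  have hs := Nat.add_one_mul_choose_eq s 1
  simp only [Nat.choose_one_right] at hr hs
  zify at *
  nlinarith [sq_nonneg ((r : ℤ) - s)]

lemma exists_pos_le_prod_one_sub_pow {s : ℝ} (hs0 : 0 ≤ s) (hs1 : s < 1) :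
    ∃ κ > 0, ∀ r, κ ≤ ∏ k ∈ range r, (1 - s ^ (k + 1)) := by
  have hsum : Summable fun k : ℕ => ‖-s ^ (k + 1)‖ := by
    simpa [abs_of_nonneg hs0, pow_succ] using
      (summable_geometric_of_lt_one hs0 hs1).mul_right s
  have hlt (k : ℕ) : s ^ (k + 1) < 1 := pow_lt_one₀ hs0 hs1 k.succ_ne_zero
  have hprod := (multipliable_one_add_of_summable hsum).hasProd
  have hne := tprod_one_add_ne_zero_of_summable (fun k => by linarith [hlt k]) hsum
  simp only [← sub_eq_add_neg] at hprod hne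
  refine ⟨_, (tprod_nonneg fun k => by linarith [hlt k]).lt_of_ne' hne, ?_⟩
  refine Antitone.le_of_tendsto (antitone_nat_of_succ_le fun r => ?_) hprod.tendsto_prod_nat
  rw [prod_range_succ]
  exact mul_le_of_le_one_right (prod_nonneg fun k _ => by linarith [hlt k])
    (by linarith [pow_nonneg hs0 (r + 1)])

section Coefficients

variable {K : Type*} [Field K]

def qFac (q : K) (r : ℕ) : K := ∏ i ∈ range r, (q ^ (i + 1) - 1)

def coeffTerm (q : K) (r s : ℕ) : K := q ^ (r * s) / (qFac q r * qFac q s)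

def coeff (q : K) (n : ℕ) : K := ∑ p ∈ antidiagonal n, coeffTerm q p.1 p.2

def crossSum (q : K) (n : ℕ) : K :=
  ∑ p ∈ antidiagonal n, (q ^ p.1 - 1) * (q ^ p.2 - 1) * coeffTerm q p.1 p.2

variable {q : K}

lemma qFac_succ (r : ℕ) : qFac q (r + 1) = qFac q r * (q ^ (r + 1) - 1) :=
  prod_range_succ _ _

lemma qFac_ne_zero (hq : ∀ k : ℕ, q ^ (k + 1) ≠ 1) (r : ℕ) : qFac q r ≠ 0 :=
  prod_ne_zero_iff.mpr fun k _ => sub_ne_zero.mpr (hq k)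

lemma coeffTerm_comm (r s : ℕ) : coeffTerm q r s = coeffTerm q s r := by
  rw [coeffTerm, coeffTerm, mul_comm r, mul_comm (qFac q r)]

lemma sub_one_mul_coeffTerm_succ (hq : ∀ k : ℕ, q ^ (k + 1) ≠ 1) (r s : ℕ) :
    (q ^ (r + 1) - 1) * coeffTerm q (r + 1) s = q ^ s * coeffTerm q r s := by
  have := qFac_ne_zero hq r
  have := qFac_ne_zero hq s
  have := sub_ne_zero.mpr (hq r)
  rw [coeffTerm, coeffTerm, qFac_succ]
  field_simp
  ring

lemma sum_antidiagonal_coeffTerm_swap (g : ℕ → K) (n : ℕ) :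
    ∑ p ∈ antidiagonal n, g p.1 * coeffTerm q p.1 p.2 =
      ∑ p ∈ antidiagonal n, g p.2 * coeffTerm q p.1 p.2 := by
  rw [← Nat.sum_antidiagonal_swap]
  simp only [Prod.fst_swap, Prod.snd_swap, coeffTerm_comm]

lemma sum_sub_one_mul_coeffTerm (hq : ∀ k : ℕ, q ^ (k + 1) ≠ 1) (m : ℕ) :
    ∑ p ∈ antidiagonal (m + 1), (q ^ p.1 - 1) * coeffTerm q p.1 p.2 =
      ∑ p ∈ antidiagonal m, q ^ p.2 * coeffTerm q p.1 p.2 := by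
  rw [Nat.sum_antidiagonal_succ, pow_zero, sub_self, zero_mul, zero_add]
  exact sum_congr rfl fun p _ => sub_one_mul_coeffTerm_succ hq p.1 p.2

lemma crossSum_zero : crossSum q 0 = 0 := by simp [crossSum]

lemma crossSum_one : crossSum q 1 = 0 := by
  simp [crossSum, Nat.sum_antidiagonal_succ]

lemma crossSum_add_two (hq : ∀ k : ℕ, q ^ (k + 1) ≠ 1) (m : ℕ) :
    crossSum q (m + 2) = q ^ (m + 1) * coeff q m := by
  rw [crossSum, Nat.sum_antidiagonal_succ, Nat.sum_antidiagonal_succ', coeff, mul_sum]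
  simp only [pow_zero, sub_self, zero_mul, mul_zero, zero_add]
  refine sum_congr rfl fun p hp => ?_
  have h1 := sub_one_mul_coeffTerm_succ hq p.1 (p.2 + 1)
  have h2 := sub_one_mul_coeffTerm_succ hq p.2 p.1
  rw [coeffTerm_comm (p.2 + 1), coeffTerm_comm p.2] at h2
  rw [← mem_antidiagonal.mp hp]
  linear_combination (q ^ (p.2 + 1) - 1) * h1 + q ^ (p.2 + 1) * h2

lemma coeff_zero : coeff q 0 = 1 := by simp [coeff, coeffTerm, qFac]

lemma sub_one_mul_coeff_succ (hq : ∀ k : ℕ, q ^ (k + 1) ≠ 1) (m : ℕ) :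
    (q ^ (m + 1) - 1) * coeff q (m + 1) =
      (q ^ m + 1) * coeff q m + crossSum q (m + 1) - crossSum q m := by
  -- `q ^ (r + s) + 1 = (q ^ r - 1) (q ^ s - 1) + q ^ r + q ^ s`, and the last two terms have
  -- the same sum by the symmetry of `coeffTerm`
  have split (n : ℕ) : (q ^ n + 1) * coeff q n =
      crossSum q n + 2 * ∑ p ∈ antidiagonal n, q ^ p.1 * coeffTerm q p.1 p.2 := by
    rw [two_mul]
    nth_rw 2 [sum_antidiagonal_coeffTerm_swap]
    rw [coeff, crossSum, mul_sum, ← sum_add_distrib, ← sum_add_distrib]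
    refine sum_congr rfl fun p hp => ?_
    rw [← mem_antidiagonal.mp hp, pow_add]
    ring
  have shift := sum_sub_one_mul_coeffTerm hq m
  simp only [sub_mul, one_mul, sum_sub_distrib] at shift
  have swap := sum_antidiagonal_coeffTerm_swap (q := q) (fun k => q ^ k) m
  unfold coeff at split ⊢
  linear_combination split (m + 1) - split m + 2 * shift - 2 * swap

lemma coeff_add_three (hq : ∀ k : ℕ, q ^ (k + 1) ≠ 1) (m : ℕ) :
    (q ^ (m + 3) - 1) * coeff q (m + 3) = (q ^ (m + 2) + 1) * coeff q (m + 2) +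
      q ^ (m + 2) * coeff q (m + 1) - q ^ (m + 1) * coeff q m := by
  rw [sub_one_mul_coeff_succ hq, crossSum_add_two hq, crossSum_add_two hq]

end Coefficients

section FunctionalEquation

variable {K : Type*} [Field K] [TopologicalSpace K] [IsTopologicalRing K] [T2Space K] {q : K}

theorem hasSum_coeff_functional_equation (hq : ∀ k : ℕ, q ^ (k + 1) ≠ 1) {v F G : K}
    (hF : HasSum (fun n => coeff q n * v ^ n) F)
    (hG : HasSum (fun n => coeff q n * (q * v) ^ n) G) :
    (1 - v) * (1 - q * v ^ 2) * G = (1 + v) * F := by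
  have h1 : (q - 1) * coeff q 1 = 2 := by
    simpa [crossSum_zero, crossSum_one, coeff_zero, one_add_one_eq_two] using
      sub_one_mul_coeff_succ hq 0
  have h2 : (q ^ 2 - 1) * coeff q 2 = (q + 1) * coeff q 1 + q := by
    simpa [crossSum_one, crossSum_add_two hq 0, coeff_zero] using sub_one_mul_coeff_succ hq 1
  have lhs := ((hasSum_nat_add_iff' 3).mpr hG).sub ((hasSum_nat_add_iff' 3).mpr hF)
  have rhs :=
    ((((hasSum_nat_add_iff' 2).mpr hG).add ((hasSum_nat_add_iff' 2).mpr hF)).mul_left v).add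
      ((((hasSum_nat_add_iff' 1).mpr hG).mul_left (q * v ^ 2)).sub (hG.mul_left (q * v ^ 3)))
  -- shifted by 3, the series match termwise by `coeff_add_three`; the initial terms cancel by
  -- `h1` and `h2`
  have E := lhs.unique (rhs.congr_fun fun m => ?_)
  · simp only [sum_range_succ, sum_range_zero, coeff_zero] at E
    linear_combination E + v * h1 + v ^ 2 * h2
  · rw [mul_pow, mul_pow, mul_pow]
    linear_combination v ^ (m + 3) * coeff_add_three hq m

end FunctionalEquation

section Normed

variable {K : Type*} [NormedField K] {q : K}

lemma pow_succ_ne_one_of_one_lt_norm (hq : 1 < ‖q‖) (k : ℕ) : q ^ (k + 1) ≠ 1 := by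
  intro h
  have h' := congrArg norm h
  rw [norm_pow, norm_one] at h'
  exact (one_lt_pow₀ hq k.succ_ne_zero).ne' h'

lemma norm_pow_mul_prod_le_norm_qFac (hq : 1 < ‖q‖) (r : ℕ) :
    ‖q‖ ^ (r + 1).choose 2 * ∏ k ∈ range r, (1 - ‖q‖⁻¹ ^ (k + 1)) ≤ ‖qFac q r‖ := by
  induction r with
  | zero => simp [qFac]
  | succ r ih =>
    have hq0 : ‖q‖ ≠ 0 := by positivity
    have hfac : ‖q‖ ^ (r + 1) * (1 - ‖q‖⁻¹ ^ (r + 1)) ≤ ‖q ^ (r + 1) - 1‖ := by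
      have : ‖q‖ ^ (r + 1) * (1 - ‖q‖⁻¹ ^ (r + 1)) = ‖q ^ (r + 1)‖ - ‖(1 : K)‖ := by
        rw [norm_pow, norm_one, mul_sub, mul_one, ← mul_pow, mul_inv_cancel₀ hq0, one_pow]
      exact this ▸ norm_sub_norm_le _ _
    have hnonneg : 0 ≤ 1 - ‖q‖⁻¹ ^ (r + 1) :=
      sub_nonneg.mpr (pow_le_one₀ (by positivity) (inv_le_one_of_one_le₀ hq.le))
    rw [Nat.choose_succ_succ', Nat.choose_one_right, prod_range_succ, qFac_succ, norm_mul,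
      pow_add]
    calc ‖q‖ ^ (r + 1) * ‖q‖ ^ (r + 1).choose 2 *
          ((∏ k ∈ range r, (1 - ‖q‖⁻¹ ^ (k + 1))) * (1 - ‖q‖⁻¹ ^ (r + 1)))
        = (‖q‖ ^ (r + 1).choose 2 * ∏ k ∈ range r, (1 - ‖q‖⁻¹ ^ (k + 1))) *
          (‖q‖ ^ (r + 1) * (1 - ‖q‖⁻¹ ^ (r + 1))) := by ring
      _ ≤ ‖qFac q r‖ * ‖q ^ (r + 1) - 1‖ :=
        mul_le_mul ih hfac (by positivity) (norm_nonneg _)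

lemma exists_norm_coeffTerm_le (hq : 1 < ‖q‖) : ∃ C, ∀ r s, ‖coeffTerm q r s‖ ≤ C := by
  obtain ⟨κ, hκ, hκle⟩ := exists_pos_le_prod_one_sub_pow (inv_nonneg.mpr (norm_nonneg q))
    (inv_lt_one_of_one_lt₀ hq)
  have hlow (r : ℕ) : ‖q‖ ^ (r + 1).choose 2 * κ ≤ ‖qFac q r‖ :=
    (mul_le_mul_of_nonneg_left (hκle r) (by positivity)).trans
      (norm_pow_mul_prod_le_norm_qFac hq r)
  refine ⟨(κ ^ 2)⁻¹, fun r s => ?_⟩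
  rw [coeffTerm, norm_div, norm_mul, norm_pow]
  calc ‖q‖ ^ (r * s) / (‖qFac q r‖ * ‖qFac q s‖)
      ≤ ‖q‖ ^ ((r + 1).choose 2 + (s + 1).choose 2) /
          ((‖q‖ ^ (r + 1).choose 2 * κ) * (‖q‖ ^ (s + 1).choose 2 * κ)) :=
        div_le_div₀ (by positivity) (pow_le_pow_right₀ hq.le (mul_le_choose_two_add_choose_two r s))
          (by positivity) (mul_le_mul (hlow r) (hlow s) (by positivity) (norm_nonneg _))
    _ = (κ ^ 2)⁻¹ := by
        rw [pow_add]
        field_simp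

lemma exists_norm_coeff_le (hq : 1 < ‖q‖) : ∃ C, ∀ n, ‖coeff q n‖ ≤ C * (n + 1) := by
  obtain ⟨C, hC⟩ := exists_norm_coeffTerm_le hq
  refine ⟨C, fun n => (norm_sum_le _ _).trans ?_⟩
  calc ∑ p ∈ antidiagonal n, ‖coeffTerm q p.1 p.2‖ ≤ ∑ _p ∈ antidiagonal n, C :=
        sum_le_sum fun p _ => hC p.1 p.2
    _ = C * (n + 1) := by
        rw [sum_const, Nat.card_antidiagonal, nsmul_eq_mul]; push_cast; ring

lemma summable_norm_coeff_mul_pow (hq : 1 < ‖q‖) {ρ : ℝ} (hρ0 : 0 ≤ ρ) (hρ1 : ρ < 1) :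
    Summable fun n => ‖coeff q n‖ * ρ ^ n := by
  obtain ⟨C, hC⟩ := exists_norm_coeff_le hq
  have hρ : ‖ρ‖ < 1 := by rwa [Real.norm_of_nonneg hρ0]
  have hgeom := ((summable_pow_mul_geometric_of_norm_lt_one 1 hρ).add
    (summable_geometric_of_lt_one hρ0 hρ1)).mul_left C
  refine hgeom.of_nonneg_of_le (fun n => by positivity) fun n => ?_
  calc ‖coeff q n‖ * ρ ^ n ≤ C * (n + 1) * ρ ^ n :=
        mul_le_mul_of_nonneg_right (hC n) (by positivity)
    _ = C * ((n : ℝ) ^ 1 * ρ ^ n + ρ ^ n) := by ring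

lemma norm_div_pow_lt_one (hq : 1 < ‖q‖) {v : K} (hv : ‖v‖ < 1) (N : ℕ) : ‖v / q ^ N‖ < 1 := by
  rw [norm_div, norm_pow]
  exact (div_le_self (norm_nonneg v) (one_le_pow₀ hq.le)).trans_lt hv

lemma summable_norm_div_pow_succ (hq : 1 < ‖q‖) (v : K) :
    Summable fun i : ℕ => ‖v / q ^ (i + 1)‖ := by
  refine ((summable_geometric_of_lt_one (inv_nonneg.mpr (norm_nonneg q))
    (inv_lt_one_of_one_lt₀ hq)).mul_left (‖v‖ * ‖q‖⁻¹)).congr fun i => ?_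
  rw [norm_div, norm_pow, div_eq_mul_inv, ← inv_pow, pow_succ']
  ring

variable [CompleteSpace K]

noncomputable def coeffSeries (q w : K) : K := ∑' n, coeff q n * w ^ n

lemma hasSum_coeffSeries (hq : 1 < ‖q‖) {w : K} (hw : ‖w‖ < 1) :
    HasSum (fun n => coeff q n * w ^ n) (coeffSeries q w) :=
  (Summable.of_norm (by simpa only [norm_mul, norm_pow] using
    summable_norm_coeff_mul_pow hq (norm_nonneg w) hw)).hasSum

lemma tendsto_coeffSeries_nhds_zero (hq : 1 < ‖q‖) : Tendsto (coeffSeries q) (𝓝 0) (𝓝 1) := by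
  have h := tendsto_tsum_of_dominated_convergence (𝓕 := 𝓝 (0 : K))
    (f := fun w n => coeff q n * w ^ n) (g := fun n => coeff q n * 0 ^ n)
    (summable_norm_coeff_mul_pow hq (by norm_num : (0 : ℝ) ≤ 1 / 2) (by norm_num))
    (fun n => ((continuous_pow n).tendsto 0).const_mul _) ?_
  · rwa [tsum_eq_single 0 fun n hn => by simp [hn], pow_zero, mul_one, coeff_zero] at h
  · filter_upwards [Metric.closedBall_mem_nhds (0 : K) (by norm_num : (0 : ℝ) < 1 / 2)]
      with w hw n
    rw [Metric.mem_closedBall, dist_zero_right] at hw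
    rw [norm_mul, norm_pow]
    gcongr

lemma coeffSeries_functional_equation (hq : 1 < ‖q‖) {u : K} (hu : ‖u‖ < 1) :
    (1 - u ^ 2 / q) * (1 - u ^ 2 / q ^ 2) * coeffSeries q u =
      (1 + u / q) ^ 2 * coeffSeries q (u / q) := by
  have hq0 : q ≠ 0 := norm_pos_iff.mp (one_pos.trans hq)
  have huq : ‖u / q‖ < 1 := by simpa using norm_div_pow_lt_one hq hu 1
  have h := hasSum_coeff_functional_equation (pow_succ_ne_one_of_one_lt_norm hq)
    (hasSum_coeffSeries hq huq) (by rw [mul_div_cancel₀ _ hq0]; exact hasSum_coeffSeries hq hu)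
  field_simp at h ⊢
  linear_combination (q + u) * h

lemma prod_mul_coeffSeries (hq : 1 < ‖q‖) {u : K} (hu : ‖u‖ < 1) (N : ℕ) :
    (∏ i ∈ range (2 * N), (1 - u ^ 2 / q ^ (i + 1))) * coeffSeries q u =
      (∏ i ∈ range N, (1 + u / q ^ (i + 1))) ^ 2 * coeffSeries q (u / q ^ N) := by
  induction N with
  | zero => simp
  | succ N ih =>
    have h := coeffSeries_functional_equation hq (norm_div_pow_lt_one hq hu N)
    rw [div_div, ← pow_succ] at h
    rw [show 2 * (N + 1) = 2 * N + 1 + 1 by ring, prod_range_succ, prod_range_succ,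
      prod_range_succ]
    have e1 : u ^ 2 / q ^ (2 * N + 1) = (u / q ^ N) ^ 2 / q := by ring
    have e2 : u ^ 2 / q ^ (2 * N + 1 + 1) = (u / q ^ N) ^ 2 / q ^ 2 := by ring
    rw [e1, e2]
    linear_combination (1 - (u / q ^ N) ^ 2 / q) * (1 - (u / q ^ N) ^ 2 / q ^ 2) * ih +
      (∏ i ∈ range N, (1 + u / q ^ (i + 1))) ^ 2 * h

theorem tprod_div_tprod_eq_coeffSeries (hq : 1 < ‖q‖) {u : K} (hu : ‖u‖ < 1) :
    (∏' i : ℕ, (1 + u / q ^ (i + 1)) ^ 2) / (∏' i : ℕ, (1 - u ^ 2 / q ^ (i + 1))) =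
      coeffSeries q u := by
  have hu2 : ‖u ^ 2‖ < 1 := by rw [norm_pow]; exact pow_lt_one₀ (norm_nonneg u) hu two_ne_zero
  have hA := (multipliable_one_add_of_summable (summable_norm_div_pow_succ hq u)).hasProd
  have hsB : Summable fun i : ℕ => ‖-(u ^ 2 / q ^ (i + 1))‖ := by
    simpa only [norm_neg] using summable_norm_div_pow_succ hq (u ^ 2)
  have hB := (multipliable_one_add_of_summable hsB).hasProd
  have hBne := tprod_one_add_ne_zero_of_summable (fun i h =>
    (norm_div_pow_lt_one hq hu2 (i + 1)).ne (by rw [← add_neg_eq_zero.mp h, norm_one])) hsB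
  simp only [← sub_eq_add_neg] at hB hBne
  have hx : Tendsto (fun N : ℕ => u / q ^ N) atTop (𝓝 0) := by
    have hinv : ‖q⁻¹‖ < 1 := by rw [norm_inv]; exact inv_lt_one_of_one_lt₀ hq
    simpa [div_eq_mul_inv] using (tendsto_pow_atTop_nhds_zero_of_norm_lt_one hinv).const_mul u
  have lim1 := (hB.tendsto_prod_nat.comp (tendsto_id.const_mul_atTop' two_pos)).mul_const
    (coeffSeries q u)
  have lim2 := (hA.tendsto_prod_nat.pow 2).mul ((tendsto_coeffSeries_nhds_zero hq).comp hx)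
  have key := tendsto_nhds_unique (lim1.congr (prod_mul_coeffSeries hq hu)) lim2
  rw [(hA.pow 2).tprod_eq, div_eq_iff hBne]
  linear_combination -key

end Normed

lemma pow_choose_two_mul_sum_glGamma {q : ℝ} (hq : q ≠ 0) (n : ℕ) :
    q ^ n.choose 2 * ∑ r ∈ range (n + 1), 1 / (glGamma q r * glGamma q (n - r)) =
      coeff q n := by
  rw [coeff, Nat.sum_antidiagonal_eq_sum_range_succ (fun r s => coeffTerm q r s), mul_sum]
  refine sum_congr rfl fun r hr => ?_
  obtain ⟨s, rfl⟩ := Nat.exists_eq_add_of_le (Nat.lt_add_one_iff.mp (mem_range.mp hr))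
  rw [Nat.add_sub_cancel_left, add_choose_two, glGamma, glGamma, coeffTerm, ← qFac, ← qFac]
  field_simp
  ring

end GLOddSeries

open GLOddSeries in
/-- Stated for the convergent series and products at `|u| < 1`, which determine the formal power
series identity in `u`. -/
theorem gl_odd_q_series_identity (q u : ℝ) (hq : 1 < |q|) (hu : |u| < 1) :
    (∏' i : ℕ, (1 + u / q ^ (i + 1)) ^ 2) / (∏' i : ℕ, (1 - u ^ 2 / q ^ (i + 1))) =
      ∑' n : ℕ, u ^ n * q ^ n.choose 2 *
        ∑ r ∈ Finset.range (n + 1), 1 / (glGamma q r * glGamma q (n - r)) := by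
  have hq0 : q ≠ 0 := abs_pos.mp (zero_lt_one.trans hq)
  rw [tprod_div_tprod_eq_coeffSeries hq hu, coeffSeries]
  refine tsum_congr fun n => ?_
  rw [mul_assoc, pow_choose_two_mul_sum_glGamma hq0, mul_comm]
end

section
/- Let N-bar(d,q) denote the number of U-irreducible polynomials of degree d over F_{q^2}, i.e., the number of orbits of size d of the map a -> a^{-q} on the multiplicative group of the algebraic closure of F_q. Then N-bar(d,q) = (1/d) sum_{r | d} mu(r) (q^{d/r} - (-1)^{d/r}), where mu is the Moebius function. -/
/-- The map `F̃ : a ↦ a^{-q}` on the multiplicative group of the algebraic closure of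
`F = 𝔽_q`. -/
noncomputable def Ftilde (F : Type) [Field F] (q : ℕ) :
    (AlgebraicClosure F)ˣ → (AlgebraicClosure F)ˣ :=
  fun a => (a ^ q)⁻¹

/-- `N̄(d,q)`: the number of U-irreducible polynomials of degree `d`, i.e. the number of
orbits of size `d` of the map `a ↦ a^{-q}` on the multiplicative group of the algebraic
closure of `𝔽_q`: the number of points of exact period `d`, divided by `d`. -/
noncomputable def Nbar (F : Type) [Field F] (q d : ℕ) : ℕ :=
  Nat.card {a : (AlgebraicClosure F)ˣ //
    (Ftilde F q)^[d] a = a ∧ ∀ m, 0 < m → m < d → (Ftilde F q)^[m] a ≠ a} / d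

/-!
`F̃` is `a ↦ a ^ (-q)`, so the fixed points of `F̃^[m]` are the roots of unity of order dividing
`(-q)^m - 1`. This integer is `-1` modulo the characteristic, so the algebraic closure contains
exactly `|(-q)^m - 1| = q^m - (-1)^m` of them. Sorting these points by minimal period gives
`∑_{r ∣ m} P(r) = q^m - (-1)^m`, where `P(r)` counts the points of exact period `r`, and Möbius
inversion yields `P(d)`. The truncated division in `N̄` is exact because `ZMod d` acts freely on
the points of exact period `d`.
-/

open Function

namespace Function

variable {α : Type*} {f : α → α}

theorem minimalPeriod_eq_iff {x : α} {d : ℕ} (hd : 0 < d) :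
    minimalPeriod f x = d ↔ f^[d] x = x ∧ ∀ m, 0 < m → m < d → f^[m] x ≠ x := by
  refine ⟨fun h ↦ ⟨h ▸ iterate_minimalPeriod, fun m hm hmd ↦
    not_isPeriodicPt_of_pos_of_lt_minimalPeriod hm.ne' (h ▸ hmd)⟩, fun ⟨hper, hmin⟩ ↦ ?_⟩
  refine (IsPeriodicPt.minimalPeriod_le hd hper).antisymm (not_lt.mp fun hlt ↦ ?_)
  exact hmin _ (IsPeriodicPt.minimalPeriod_pos hd hper) hlt iterate_minimalPeriod

theorem natCard_isPeriodicPt_eq_sum {m : ℕ} (hm : m ≠ 0) [Finite {x // IsPeriodicPt f m x}] :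
    Nat.card {x // IsPeriodicPt f m x} =
      ∑ r ∈ m.divisors, Nat.card {x // minimalPeriod f x = r} := by
  let e : {x // IsPeriodicPt f m x} ≃ Σ r : m.divisors, {x // minimalPeriod f x = r} :=
    { toFun x := ⟨⟨minimalPeriod f x, Nat.mem_divisors.mpr ⟨x.2.minimalPeriod_dvd, hm⟩⟩, x, rfl⟩
      invFun p := ⟨p.2, isPeriodicPt_iff_minimalPeriod_dvd.mpr
        (p.2.2.symm ▸ (Nat.mem_divisors.mp p.1.2).1)⟩
      left_inv _ := rfl
      right_inv p := Sigma.subtype_ext (Subtype.ext p.2.2) rfl }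
  have : Finite (Σ r : m.divisors, {x // minimalPeriod f x = r}) := .of_equiv _ e
  have (r : m.divisors) : Finite {x // minimalPeriod f x = r} :=
    .of_injective (Sigma.mk (β := fun r : m.divisors ↦ {x // minimalPeriod f x = r}) r)
      sigma_mk_injective
  rw [Nat.card_congr e, Nat.card_sigma]
  exact Finset.sum_coe_sort m.divisors fun r ↦ Nat.card {x // minimalPeriod f x = r}

abbrev minimalPeriodAddAction (f : α → α) (d : ℕ) [NeZero d] :
    AddAction (ZMod d) {x // minimalPeriod f x = d} where
  vadd k x := ⟨f^[k.val] x, by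
    rw [minimalPeriod_apply_iterate (minimalPeriod_pos_iff_mem_periodicPts.mp
      (x.2.symm ▸ NeZero.pos d)), x.2]⟩
  zero_vadd x := Subtype.ext (by change f^[(0 : ZMod d).val] x = x; simp)
  add_vadd a b x := by
    apply Subtype.ext
    change f^[(a + b).val] x = f^[a.val] (f^[b.val] x)
    have := iterate_mod_minimalPeriod_eq (f := f) (x := x.1) (n := a.val + b.val)
    rwa [x.2, iterate_add_apply, ← ZMod.val_add] at this

theorem dvd_natCard_minimalPeriod_eq (f : α → α) {d : ℕ} (hd : d ≠ 0) :
    d ∣ Nat.card {x // minimalPeriod f x = d} := by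
  have : NeZero d := ⟨hd⟩
  let := minimalPeriodAddAction f d
  have hfree (x : {x // minimalPeriod f x = d}) : AddAction.stabilizer (ZMod d) x = ⊥ := by
    refine (AddSubgroup.eq_bot_iff_forall _).mpr fun k hk ↦ ?_
    have hfix : IsPeriodicPt f k.val x := congrArg Subtype.val hk
    exact (ZMod.val_eq_zero k).mp
      (hfix.eq_zero_of_lt_minimalPeriod (x.2.symm ▸ ZMod.val_lt k))
  rw [Nat.card_congr (AddAction.selfEquivOrbitsQuotientProd hfree), Nat.card_prod,
    Nat.card_zmod]
  exact dvd_mul_left d _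

end Function

theorem abs_neg_pow_sub_one {R : Type*} [CommRing R] [LinearOrder R] [IsStrictOrderedRing R]
    {a : R} (ha : 1 ≤ a) (m : ℕ) : |(-a) ^ m - 1| = a ^ m - (-1) ^ m := by
  have hpow : 1 ≤ a ^ m := one_le_pow₀ ha
  rcases m.even_or_odd with hm | hm
  · rw [hm.neg_pow, hm.neg_one_pow, abs_of_nonneg (sub_nonneg.mpr hpow)]
  · rw [hm.neg_pow, hm.neg_one_pow, abs_of_neg (by linarith)]
    ring

theorem IsSepClosed.natCard_zpow_eq_one (K : Type*) [Field K] [IsSepClosed K] {z : ℤ}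
    (hz : (z : K) ≠ 0) : Nat.card {a : Kˣ // a ^ z = 1} = z.natAbs := by
  have : NeZero (z.natAbs : K) := ⟨by
    rcases Int.natAbs_eq z with h | h <;> rw [h] at hz <;> simpa using hz⟩
  have : NeZero z.natAbs := .of_neZero_natCast K
  rw [← HasEnoughRootsOfUnity.natCard_rootsOfUnity K z.natAbs]
  exact Nat.card_congr (Equiv.subtypeEquivRight fun a ↦ by
    rw [mem_rootsOfUnity, pow_natAbs_eq_one])

theorem IsSepClosed.finite_zpow_eq_one (K : Type*) [Field K] [IsSepClosed K] {z : ℤ}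
    (hz : (z : K) ≠ 0) : Finite {a : Kˣ // a ^ z = 1} :=
  Nat.finite_of_card_ne_zero <| by
    rw [natCard_zpow_eq_one K hz, Int.natAbs_ne_zero]
    rintro rfl
    exact hz Int.cast_zero

section Ftilde

variable {F : Type} [Field F] {q : ℕ}

theorem Ftilde_eq_zpow : Ftilde F q = (· ^ (-(q : ℤ))) := by
  funext a
  simp [Ftilde, zpow_neg]

theorem isPeriodicPt_Ftilde_iff {m : ℕ} {a : (AlgebraicClosure F)ˣ} :
    IsPeriodicPt (Ftilde F q) m a ↔ a ^ ((-(q : ℤ)) ^ m - 1) = 1 := by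
  rw [IsPeriodicPt, IsFixedPt, Ftilde_eq_zpow, zpow_iterate, zpow_sub_one, mul_inv_eq_one]

theorem cast_neg_pow_sub_one_ne_zero [Fintype F] (hq : Fintype.card F = q) {m : ℕ} (hm : m ≠ 0) :
    (((-(q : ℤ)) ^ m - 1 : ℤ) : AlgebraicClosure F) ≠ 0 := by
  have hqK : (q : AlgebraicClosure F) = 0 := by
    rw [← map_natCast (algebraMap F _), ← hq, FiniteField.cast_card_eq_zero, map_zero]
  simp [hqK, zero_pow hm]

theorem sum_natCard_minimalPeriod_Ftilde [Fintype F] (hq : Fintype.card F = q) {m : ℕ}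
    (hm : m ≠ 0) :
    ∑ r ∈ m.divisors, (Nat.card {a // minimalPeriod (Ftilde F q) a = r} : ℤ) =
      q ^ m - (-1) ^ m := by
  have hz := cast_neg_pow_sub_one_ne_zero hq hm
  let e : {a // IsPeriodicPt (Ftilde F q) m a} ≃
      {a : (AlgebraicClosure F)ˣ // a ^ ((-(q : ℤ)) ^ m - 1) = 1} :=
    Equiv.subtypeEquivRight fun _ ↦ isPeriodicPt_Ftilde_iff
  have := IsSepClosed.finite_zpow_eq_one _ hz
  have : Finite {a // IsPeriodicPt (Ftilde F q) m a} := .of_equiv _ e.symm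
  rw [← Nat.cast_sum, ← natCard_isPeriodicPt_eq_sum hm, Nat.card_congr e,
    IsSepClosed.natCard_zpow_eq_one _ hz, Int.natCast_natAbs]
  have hq1 : (1 : ℤ) ≤ q := by exact_mod_cast hq ▸ Fintype.card_pos
  exact abs_neg_pow_sub_one hq1 m

theorem Nbar_eq_natCard_minimalPeriod_div {d : ℕ} (hd : 0 < d) :
    Nbar F q d = Nat.card {a // minimalPeriod (Ftilde F q) a = d} / d := by
  rw [Nbar, Nat.card_congr (Equiv.subtypeEquivRight fun a ↦ (minimalPeriod_eq_iff hd).symm)]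

end Ftilde

/-- `N̄(d,q) = (1/d) ∑_{r ∣ d} μ(r) (q^{d/r} - (-1)^{d/r})`, where `μ` is the Möbius
function. -/
theorem Nbar_eq_moebius_sum (F : Type) [Field F] [Fintype F] (q d : ℕ)
    (hq : Fintype.card F = q) (hd : 0 < d) :
    (Nbar F q d : ℚ) =
      (1 / (d : ℚ)) * ∑ r ∈ d.divisors,
        (ArithmeticFunction.moebius r : ℚ) * ((q : ℚ) ^ (d / r) - (-1) ^ (d / r)) := by
  let P (r : ℕ) : ℕ := Nat.card {a // minimalPeriod (Ftilde F q) a = r}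
  have hinv := (ArithmeticFunction.sum_eq_iff_sum_mul_moebius_eq (f := fun r ↦ (P r : ℚ))
    (g := fun m ↦ (q : ℚ) ^ m - (-1) ^ m)).mp (fun m hm ↦ by
      exact_mod_cast sum_natCard_minimalPeriod_Ftilde hq hm.ne') d hd
  rw [Nat.sum_divisorsAntidiagonal fun r m ↦ (ArithmeticFunction.moebius r : ℚ) *
    ((q : ℚ) ^ m - (-1) ^ m)] at hinv
  rw [Nbar_eq_natCard_minimalPeriod_div hd,
    Nat.cast_div (dvd_natCard_minimalPeriod_eq _ hd.ne') (by exact_mod_cast hd.ne'), hinv]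
  ring
end
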